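/- arXiv:math/0511474 — 14 statements merged into one kernel-verified Lean document; each statement's English description precedes it below -/
import Mathlib

section
/- For every element g of the generalized Thompson group F(p) there exist m, n ≥ 0 and natural numbers i_1 ≤ i_2 ≤ … ≤ i_m and j_1 ≤ j_2 ≤ … ≤ j_n such that g = x_{i_1} x_{i_2} ⋯ x_{i_m} · x_{j_n}^{-1} ⋯ x_{j_2}^{-1} x_{j_1}^{-1} in F(p). -/
/-- Relators of the generalized Thompson group `F(p)`:
`x_j x_i x_{j+p-1}⁻¹ x_i⁻¹` for `i < j`. -/
def ThompsonRels (p : ℕ) : Set (FreeGroup ℕ) :=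
  {r | ∃ i j : ℕ, i < j ∧
    r = FreeGroup.of j * FreeGroup.of i * (FreeGroup.of (j + p - 1))⁻¹ * (FreeGroup.of i)⁻¹}

/-- The generalized Thompson group `F(p)` as a presented group. -/
abbrev FP (p : ℕ) := PresentedGroup (ThompsonRels p)

/-- The generator `x_i` of `F(p)`. -/
def xgen (p : ℕ) (i : ℕ) : FP p := PresentedGroup.of i

/-!
The relation `x_k⁻¹ x_i = x_i x_{k+p-1}⁻¹` (`i < k`), resp. `x_{i+p-1} x_k⁻¹` (`k < i`), lets an
inverse generator travel rightwards through a positive word, so every element is `P N⁻¹` with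
`P`, `N` positive words. The relation `x_k x_i = x_i x_{k+p-1}` (`i < k`) inserts a generator
into a sorted positive word, keeping it sorted since `i ≤ k + p - 1`; hence positive words can be
sorted.
-/

namespace FP

variable {p : ℕ}

theorem xgen_mul_xgen_of_lt {i j : ℕ} (hij : i < j) :
    xgen p j * xgen p i = xgen p i * xgen p (j + p - 1) := by
  have hrel : xgen p j * xgen p i * (xgen p (j + p - 1))⁻¹ * (xgen p i)⁻¹ = 1 :=
    PresentedGroup.one_of_mem ⟨i, j, hij, rfl⟩
  rw [← mul_inv_eq_one, mul_inv_rev, ← mul_assoc, hrel]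

theorem xgen_inv_mul_xgen_of_lt {i k : ℕ} (hik : i < k) :
    (xgen p k)⁻¹ * xgen p i = xgen p i * (xgen p (k + p - 1))⁻¹ := by
  rw [inv_mul_eq_iff_eq_mul, ← mul_assoc, xgen_mul_xgen_of_lt hik, mul_inv_cancel_right]

theorem xgen_inv_mul_xgen_of_gt {i k : ℕ} (hki : k < i) :
    (xgen p k)⁻¹ * xgen p i = xgen p (i + p - 1) * (xgen p k)⁻¹ := by
  rw [inv_mul_eq_iff_eq_mul, ← mul_assoc, ← xgen_mul_xgen_of_lt hki, mul_inv_cancel_right]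

variable (p) in
def word (l : List ℕ) : FP p := (l.map (xgen p)).prod

@[simp] theorem word_nil : word p [] = 1 := rfl

@[simp] theorem word_cons (i : ℕ) (l : List ℕ) : word p (i :: l) = xgen p i * word p l :=
  List.prod_cons

@[simp] theorem word_append (l l' : List ℕ) : word p (l ++ l') = word p l * word p l' := by
  simp [word]

theorem word_eq_prod_ofFn (l : List ℕ) :
    word p l = (List.ofFn fun k => xgen p (l.get k)).prod := by
  rw [word, ← List.ofFn_get l, List.map_ofFn, List.ofFn_get]
  rfl

theorem exists_xgen_inv_mul_word (k : ℕ) (l : List ℕ) :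
    ∃ l₁ l₂ : List ℕ, (xgen p k)⁻¹ * word p l = word p l₁ * (word p l₂)⁻¹ := by
  induction l generalizing k with
  | nil => exact ⟨[], [k], by simp⟩
  | cons i t ih =>
    rcases lt_trichotomy i k with hik | rfl | hki
    · obtain ⟨l₁, l₂, h⟩ := ih (k + p - 1)
      refine ⟨i :: l₁, l₂, ?_⟩
      rw [word_cons, ← mul_assoc, xgen_inv_mul_xgen_of_lt hik, mul_assoc, h, word_cons, mul_assoc]
    · exact ⟨t, [], by simp⟩
    · obtain ⟨l₁, l₂, h⟩ := ih k
      refine ⟨(i + p - 1) :: l₁, l₂, ?_⟩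
      rw [word_cons, ← mul_assoc, xgen_inv_mul_xgen_of_gt hki, mul_assoc, h, word_cons, mul_assoc]

theorem exists_eq_word_mul_inv_word (g : FP p) :
    ∃ l₁ l₂ : List ℕ, g = word p l₁ * (word p l₂)⁻¹ := by
  have hg : g ∈ Subgroup.closure (Set.range (xgen p)) := by
    rw [show xgen p = PresentedGroup.of from rfl, PresentedGroup.closure_range_of]
    trivial
  induction hg using Subgroup.closure_induction_left with
  | one => exact ⟨[], [], by simp⟩
  | mul_left _ hx _ _ ih =>
    obtain ⟨k, rfl⟩ := hx
    obtain ⟨l₁, l₂, rfl⟩ := ih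
    exact ⟨k :: l₁, l₂, by rw [word_cons, mul_assoc]⟩
  | inv_mul_cancel _ hx _ _ ih =>
    obtain ⟨k, rfl⟩ := hx
    obtain ⟨l₁, l₂, rfl⟩ := ih
    obtain ⟨l₁', l₂', h⟩ := exists_xgen_inv_mul_word k l₁
    exact ⟨l₁', l₂ ++ l₂', by rw [← mul_assoc, h, word_append, mul_inv_rev, mul_assoc]⟩

variable (p) in
def insertGen : ℕ → List ℕ → List ℕ
  | k, [] => [k]
  | k, i :: t => if k ≤ i then k :: i :: t else i :: insertGen (k + p - 1) t

theorem word_insertGen (k : ℕ) (l : List ℕ) :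
    word p (insertGen p k l) = xgen p k * word p l := by
  induction l generalizing k with
  | nil => simp [insertGen]
  | cons i t ih =>
    unfold insertGen
    split_ifs with hki
    · rfl
    · rw [word_cons, word_cons, ih, ← mul_assoc, ← mul_assoc, xgen_mul_xgen_of_lt (show i < k by omega)]

theorem isChain_cons_insertGen {a k : ℕ} {l : List ℕ} (hak : a ≤ k)
    (hl : (a :: l).IsChain (· ≤ ·)) : (a :: insertGen p k l).IsChain (· ≤ ·) := by
  induction l generalizing a k with
  | nil => exact List.IsChain.cons_cons hak (List.isChain_singleton k)
  | cons i t ih =>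
    rw [List.isChain_cons_cons] at hl
    unfold insertGen
    split_ifs with hki
    · exact List.IsChain.cons_cons hak (List.IsChain.cons_cons hki hl.2)
    · exact List.IsChain.cons_cons hl.1 (ih (by omega) hl.2)

variable (p) in
def sortWord (l : List ℕ) : List ℕ := l.foldr (insertGen p) []

theorem word_sortWord (l : List ℕ) : word p (sortWord p l) = word p l := by
  induction l with
  | nil => rfl
  | cons i t ih => rw [word_cons, ← ih, ← word_insertGen]; rfl

theorem sortedLE_sortWord (l : List ℕ) : (sortWord p l).SortedLE := by
  suffices h : (0 :: sortWord p l).IsChain (· ≤ ·) from List.sortedLE_iff_isChain.2 h.tail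
  induction l with
  | nil => exact List.isChain_singleton 0
  | cons i t ih => exact isChain_cons_insertGen (Nat.zero_le i) ih

theorem exists_sortedLE_eq_word_mul_inv_word (g : FP p) :
    ∃ l₁ l₂ : List ℕ, l₁.SortedLE ∧ l₂.SortedLE ∧ g = word p l₁ * (word p l₂)⁻¹ := by
  obtain ⟨l₁, l₂, rfl⟩ := exists_eq_word_mul_inv_word g
  exact ⟨sortWord p l₁, sortWord p l₂, sortedLE_sortWord l₁, sortedLE_sortWord l₂,
    by rw [word_sortWord, word_sortWord]⟩

end FP

theorem stmt0_general (p : ℕ) (g : FP p) :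
    ∃ (m n : ℕ) (i : Fin m → ℕ) (j : Fin n → ℕ),
      Monotone i ∧ Monotone j ∧
      g = (List.ofFn (fun k => xgen p (i k))).prod *
          ((List.ofFn (fun k => xgen p (j k))).prod)⁻¹ := by
  obtain ⟨l₁, l₂, h₁, h₂, rfl⟩ := FP.exists_sortedLE_eq_word_mul_inv_word g
  refine ⟨l₁.length, l₂.length, l₁.get, l₂.get, ?_, ?_, ?_⟩
  · rwa [← List.sortedLE_ofFn_iff, List.ofFn_get]
  · rwa [← List.sortedLE_ofFn_iff, List.ofFn_get]
  · rw [FP.word_eq_prod_ofFn, FP.word_eq_prod_ofFn]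

theorem stmt0 (p : ℕ) (hp : 2 ≤ p) (g : FP p) :
    ∃ (m n : ℕ) (i : Fin m → ℕ) (j : Fin n → ℕ),
      Monotone i ∧ Monotone j ∧
      g = (List.ofFn (fun k => xgen p (i k))).prod *
          ((List.ofFn (fun k => xgen p (j k))).prod)⁻¹ :=
  stmt0_general p g
end

section
/- The rewriting system Γ(p) on words over the alphabet {x_i^{±1} : i ∈ ℕ} is terminating: there is no infinite sequence of words w_0, w_1, w_2, … in which each w_{k+1} is obtained from w_k by applying one rewriting rule of Γ(p) to a subword. Equivalently, the one-step rewriting relation of Γ(p) is well-founded. -/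
/-!
Order words by the shortlex order (length first, then lexicographically) of their index sequences;
on `List ℕ` this is a well-order, embedded into the ordinals by
`[a₁, …, aₙ] ↦ ω ^ (n - 1) * (a₁ + 1) + ⋯ + ω ^ 0 * (aₙ + 1)`. Every rule of
`Γ(p)` decreases the index sequence in this order: cancellation shortens the word, and rules (2)
and (3) keep the length while replacing the first index of the rewritten pair by the smaller
index `i` (for rule (3) because `i < j ≤ j + p - 1`).
-/

/-- A letter `x_i^ε` is encoded as a pair `(i, ε)` with `ε : Bool`
(`true` = exponent `+1`, `false` = exponent `-1`). The rewriting rules of the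
system `Γ(p)`:
1. `x_i^ε x_i^{-ε} → 1`;
2. `x_j^ε x_i → x_i x_{j+p-1}^ε` for `j > i`;
3. `x_{j+p-1}^ε x_i⁻¹ → x_i⁻¹ x_j^ε` for `j > i`. -/
inductive GammaRule (p : ℕ) : List (ℕ × Bool) → List (ℕ × Bool) → Prop
  | cancel (i : ℕ) (ε : Bool) : GammaRule p [(i, ε), (i, !ε)] []
  | pos (i j : ℕ) (ε : Bool) (h : i < j) :
      GammaRule p [(j, ε), (i, true)] [(i, true), (j + p - 1, ε)]
  | neg (i j : ℕ) (ε : Bool) (h : i < j) :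
      GammaRule p [(j + p - 1, ε), (i, false)] [(i, false), (j, ε)]

/-- One-step rewriting: replace an occurrence of the left-hand side of a rule
by the corresponding right-hand side. -/
def GammaStep (p : ℕ) (w w' : List (ℕ × Bool)) : Prop :=
  ∃ u v l r, GammaRule p l r ∧ w = u ++ l ++ v ∧ w' = u ++ r ++ v

open Ordinal

noncomputable def shortlexRank : List ℕ → Ordinal.{0}
  | [] => 0
  | a :: l => ω ^ (l.length : Ordinal) * (a + 1) + shortlexRank l

namespace shortlexRank

theorem cons (a : ℕ) (l : List ℕ) :
    shortlexRank (a :: l) = ω ^ (l.length : Ordinal) * (a + 1) + shortlexRank l := rfl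

theorem lt_opow_length (l : List ℕ) : shortlexRank l < ω ^ (l.length : Ordinal) := by
  induction l with
  | nil => simp [shortlexRank]
  | cons a l ih =>
    calc shortlexRank (a :: l)
        < ω ^ (l.length : Ordinal) * (a + 1) + ω ^ (l.length : Ordinal) := by
          rw [cons]; exact add_lt_add_right ih _
      _ = ω ^ (l.length : Ordinal) * ((a + 2 : ℕ) : Ordinal) := by
          rw [← mul_add_one]; push_cast; rw [add_assoc, one_add_one_eq_two]
      _ ≤ ω ^ (l.length : Ordinal) * ω := mul_le_mul_right (natCast_lt_omega0 _).le _
      _ = ω ^ ((a :: l).length : Ordinal) := by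
          rw [← opow_succ, List.length_cons, Nat.cast_succ, ← Order.succ_eq_add_one]

theorem opow_length_le_cons (a : ℕ) (l : List ℕ) :
    ω ^ (l.length : Ordinal) ≤ shortlexRank (a :: l) :=
  calc ω ^ (l.length : Ordinal)
      ≤ ω ^ (l.length : Ordinal) * (a + 1) := le_mul_left _ (by positivity)
    _ ≤ shortlexRank (a :: l) := le_self_add

theorem lt_of_length_lt {l l' : List ℕ} (h : l.length < l'.length) :
    shortlexRank l < shortlexRank l' := by
  obtain ⟨b, t, rfl⟩ := List.exists_cons_of_length_pos (l.length.zero_le.trans_lt h)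
  calc shortlexRank l
      < ω ^ (l.length : Ordinal) := lt_opow_length l
    _ ≤ ω ^ (t.length : Ordinal) :=
        opow_le_opow_right omega0_pos (by exact_mod_cast Nat.lt_succ_iff.mp h)
    _ ≤ shortlexRank (b :: t) := opow_length_le_cons b t

theorem cons_lt_cons {a b : ℕ} {l l' : List ℕ} (hab : a < b) (hl : l.length = l'.length) :
    shortlexRank (a :: l) < shortlexRank (b :: l') :=
  calc shortlexRank (a :: l)
      < ω ^ (l.length : Ordinal) * (a + 1) + ω ^ (l.length : Ordinal) := by
        rw [cons]; exact add_lt_add_right (lt_opow_length l) _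
    _ = ω ^ (l.length : Ordinal) * ((a + 1 : ℕ) + 1) := by rw [← mul_add_one]; push_cast; rfl
    _ ≤ ω ^ (l.length : Ordinal) * (b + 1) := by gcongr; exact_mod_cast hab
    _ ≤ shortlexRank (b :: l') := by rw [cons, hl]; exact le_self_add

theorem append_lt_append (u : List ℕ) {x y : List ℕ} (hlen : y.length ≤ x.length)
    (h : shortlexRank y < shortlexRank x) : shortlexRank (u ++ y) < shortlexRank (u ++ x) := by
  induction u with
  | nil => simpa using h
  | cons a u ih =>
    have hlen' : (u ++ y).length ≤ (u ++ x).length := by simpa using hlen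
    calc shortlexRank (a :: (u ++ y))
        < ω ^ ((u ++ y).length : Ordinal) * (a + 1) + shortlexRank (u ++ x) :=
          add_lt_add_right ih _
      _ ≤ ω ^ ((u ++ x).length : Ordinal) * (a + 1) + shortlexRank (u ++ x) := by
          gcongr
          exact omega0_pos
      _ = shortlexRank (a :: (u ++ x)) := rfl

end shortlexRank

theorem GammaRule.length_le {p : ℕ} {l r : List (ℕ × Bool)} (h : GammaRule p l r) :
    r.length ≤ l.length := by
  cases h <;> simp

theorem GammaRule.shortlexRank_lt {p : ℕ} (hp : 0 < p) {l r : List (ℕ × Bool)}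
    (h : GammaRule p l r) (v : List (ℕ × Bool)) :
    shortlexRank ((r ++ v).map Prod.fst) < shortlexRank ((l ++ v).map Prod.fst) := by
  cases h with
  | cancel i ε => exact shortlexRank.lt_of_length_lt (by simp)
  | pos i j ε hij => exact shortlexRank.cons_lt_cons hij (by simp)
  | neg i j ε hij => exact shortlexRank.cons_lt_cons (by omega) (by simp)

theorem GammaStep.shortlexRank_lt {p : ℕ} (hp : 0 < p) {w w' : List (ℕ × Bool)}
    (h : GammaStep p w w') : shortlexRank (w'.map Prod.fst) < shortlexRank (w.map Prod.fst) := by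
  obtain ⟨u, v, l, r, hrule, rfl, rfl⟩ := h
  simp only [List.append_assoc, List.map_append]
  exact shortlexRank.append_lt_append _ (by simpa using hrule.length_le)
    (by simpa using hrule.shortlexRank_lt hp v)

/-- The rewriting system `Γ(p)` is terminating: the one-step rewriting
relation (viewed from the result towards the source) is well-founded, i.e.
there is no infinite sequence of one-step rewritings. -/
theorem stmt1 (p : ℕ) (hp : 2 ≤ p) :
    WellFounded (fun w' w : List (ℕ × Bool) => GammaStep p w w') :=
  Subrelation.wf (fun h => h.shortlexRank_lt (by omega))
    (InvImage.wf (fun w : List (ℕ × Bool) => shortlexRank (w.map Prod.fst)) Ordinal.lt_wf)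
end

section
/- The rewriting system Γ(p) is confluent: if a word w rewrites (under the reflexive–transitive closure of the one-step rewriting relation of Γ(p)) to two irreducible words v_1 and v_2 (irreducible meaning no rule of Γ(p) applies to any subword), then v_1 = v_2. Consequently every word over {x_i^{±1} : i ∈ ℕ} has a unique irreducible form under Γ(p). -/
/-- `Ok p a b`: the adjacent pair `a b` is irreducible. -/
def Ok (p : ℕ) : ℕ × Bool → ℕ × Bool → Prop
  | (m, d), (i, true) => ¬(m = i ∧ d = false) ∧ ¬ i < m
  | (m, d), (i, false) => ¬(m = i ∧ d = true) ∧ ¬ i + p ≤ m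

/-- Strict compatibility, preserved by the insertion recursion. -/
def Str (p : ℕ) : ℕ × Bool → ℕ × Bool → Prop
  | (cm, cd), (am, _) => (cd = true ∧ cm + p ≤ am) ∨ (cd = false ∧ cm < am)

def GNorm (p : ℕ) (w : List (ℕ × Bool)) : Prop := List.Chain' (Ok p) w

/-- Insert a letter at the left of a word, normalizing. -/
def ins (p : ℕ) : ℕ × Bool → List (ℕ × Bool) → List (ℕ × Bool)
  | a, [] => [a]
  | (m, d), (i, true) :: t =>
    if m = i ∧ d = false then t
    else if i < m then (i, true) :: ins p (m + p - 1, d) t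
    else (m, d) :: (i, true) :: t
  | (m, d), (i, false) :: t =>
    if m = i ∧ d = true then t
    else if i + p ≤ m then (i, false) :: ins p (m + 1 - p, d) t
    else (m, d) :: (i, false) :: t

def nf (p : ℕ) (w : List (ℕ × Bool)) : List (ℕ × Bool) := w.foldr (ins p) []

lemma ins_cancel_t {p m i : ℕ} (h : m = i) (t : List (ℕ × Bool)) :
    ins p (m, false) ((i, true) :: t) = t := by
  simp only [ins]; rw [if_pos ⟨h, by trivial⟩]

lemma ins_cancel_f {p m i : ℕ} (h : m = i) (t : List (ℕ × Bool)) :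
    ins p (m, true) ((i, false) :: t) = t := by
  simp only [ins]; rw [if_pos ⟨h, by trivial⟩]

lemma ins_pos {p m i : ℕ} {d : Bool} (h : i < m) (t : List (ℕ × Bool)) :
    ins p (m, d) ((i, true) :: t) = (i, true) :: ins p (m + p - 1, d) t := by
  simp only [ins]; rw [if_neg (by rintro ⟨h1, -⟩; omega), if_pos h]

lemma ins_neg {p m i : ℕ} {d : Bool} (h : i + p ≤ m) (hp : 1 ≤ p)
    (t : List (ℕ × Bool)) :
    ins p (m, d) ((i, false) :: t) = (i, false) :: ins p (m + 1 - p, d) t := by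
  simp only [ins]; rw [if_neg (by rintro ⟨h1, -⟩; omega), if_pos h]

lemma ins_ok {p : ℕ} {a b : ℕ × Bool} (h : Ok p a b) (t : List (ℕ × Bool)) :
    ins p a (b :: t) = a :: b :: t := by
  obtain ⟨m, d⟩ := a; obtain ⟨i, e⟩ := b
  cases e
  · obtain ⟨h1, h2⟩ := h
    simp only [ins]; rw [if_neg h1, if_neg h2]
  · obtain ⟨h1, h2⟩ := h
    simp only [ins]; rw [if_neg h1, if_neg h2]

lemma str_ok {p : ℕ} {c a : ℕ × Bool} (hp : 1 ≤ p) (h : Str p c a) : Ok p c a := by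
  obtain ⟨cm, cd⟩ := c; obtain ⟨am, ad⟩ := a
  rcases h with ⟨hcd, hx⟩ | ⟨hcd, hx⟩ <;> subst hcd <;> cases ad
  · exact ⟨by rintro ⟨h1, -⟩; omega, by omega⟩
  · exact ⟨by rintro ⟨-, h2⟩; exact absurd h2 (by decide), by omega⟩
  · exact ⟨by rintro ⟨-, h2⟩; exact absurd h2 (by decide), by omega⟩
  · exact ⟨by rintro ⟨h1, -⟩; omega, by omega⟩

lemma ins_of_chain {p : ℕ} {c : ℕ × Bool} {t : List (ℕ × Bool)}
    (h : List.Chain' (Ok p) (c :: t)) : ins p c t = c :: t := by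
  cases t with
  | nil => obtain ⟨cm, cd⟩ := c; rfl
  | cons b t' => exact ins_ok (List.isChain_cons_cons.mp h).1 t'

lemma ins_norm {p : ℕ} (hp : 1 ≤ p) : ∀ t : List (ℕ × Bool), GNorm p t →
    ∀ a, GNorm p (ins p a t) ∧
      ∀ c, Str p c a → List.Chain' (Ok p) (c :: t) →
        List.Chain' (Ok p) (c :: ins p a t) := by
  intro t
  induction t with
  | nil =>
    intro _ a
    obtain ⟨am, ad⟩ := a
    refine ⟨List.isChain_singleton _, fun c hs _ => ?_⟩
    exact List.isChain_cons_cons.mpr ⟨str_ok hp hs, List.isChain_singleton _⟩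
  | cons b t ih =>
    obtain ⟨i, e⟩ := b
    intro hn a
    obtain ⟨m, d⟩ := a
    have hnt : GNorm p t := hn.tail
    cases e
    · -- head is (i, false)
      by_cases h1 : m = i ∧ d = true
      · obtain ⟨hmi, hd⟩ := h1; subst hmi; subst hd
        rw [ins_cancel_f rfl t]
        refine ⟨hnt, fun c hs hch => ?_⟩
        cases t with
        | nil => exact List.isChain_singleton c
        | cons b1 t1 =>
          obtain ⟨i1, e1⟩ := b1
          obtain ⟨cm, cd⟩ := c
          have h1' : Ok p (m, false) (i1, e1) := (List.isChain_cons_cons.mp hn).1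
          have hcm : cm < m := by
            rcases hs with ⟨-, hx⟩ | ⟨-, hx⟩ <;> omega
          refine List.isChain_cons_cons.mpr ⟨?_, hnt⟩
          cases e1
          · obtain ⟨-, hb⟩ := h1'
            refine ⟨?_, by omega⟩
            rintro ⟨hx, hy⟩
            rcases hs with ⟨-, hx2⟩ | ⟨hcd, -⟩
            · omega
            · exact absurd (hcd.symm.trans hy) (by decide)
          · obtain ⟨ha, hb⟩ := h1'
            have hne : m ≠ i1 := fun hh => ha ⟨hh, rfl⟩
            exact ⟨by rintro ⟨hx, -⟩; omega, by omega⟩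
      · by_cases h2 : i + p ≤ m
        · rw [ins_neg h2 hp]
          have hstr : Str p (i, false) (m + 1 - p, d) := Or.inr ⟨rfl, by omega⟩
          have key := (ih hnt (m + 1 - p, d)).2 (i, false) hstr hn
          exact ⟨key, fun c hs hch =>
            List.isChain_cons_cons.mpr ⟨(List.isChain_cons_cons.mp hch).1, key⟩⟩
        · have hokk : Ok p (m, d) (i, false) := ⟨h1, h2⟩
          rw [ins_ok hokk]
          exact ⟨List.isChain_cons_cons.mpr ⟨hokk, hn⟩, fun c hs hch =>
            List.isChain_cons_cons.mpr ⟨str_ok hp hs, List.isChain_cons_cons.mpr ⟨hokk, hn⟩⟩⟩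
    · -- head is (i, true)
      by_cases h1 : m = i ∧ d = false
      · obtain ⟨hmi, hd⟩ := h1; subst hmi; subst hd
        rw [ins_cancel_t rfl t]
        refine ⟨hnt, fun c hs hch => ?_⟩
        cases t with
        | nil => exact List.isChain_singleton c
        | cons b1 t1 =>
          obtain ⟨i1, e1⟩ := b1
          obtain ⟨cm, cd⟩ := c
          have h1' : Ok p (m, true) (i1, e1) := (List.isChain_cons_cons.mp hn).1
          have hcm : cm < m := by
            rcases hs with ⟨-, hx⟩ | ⟨-, hx⟩ <;> omega
          refine List.isChain_cons_cons.mpr ⟨?_, hnt⟩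
          cases e1
          · obtain ⟨ha, hb⟩ := h1'
            refine ⟨?_, by omega⟩
            rintro ⟨hx, hy⟩
            rcases hs with ⟨-, hx2⟩ | ⟨hcd, -⟩
            · omega
            · exact absurd (hcd.symm.trans hy) (by decide)
          · obtain ⟨-, hb⟩ := h1'
            exact ⟨by rintro ⟨hx, -⟩; omega, by omega⟩
      · by_cases h2 : i < m
        · rw [ins_pos h2]
          have hstr : Str p (i, true) (m + p - 1, d) := Or.inl ⟨rfl, by omega⟩
          have key := (ih hnt (m + p - 1, d)).2 (i, true) hstr hn
          exact ⟨key, fun c hs hch =>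
            List.isChain_cons_cons.mpr ⟨(List.isChain_cons_cons.mp hch).1, key⟩⟩
        · have hokk : Ok p (m, d) (i, true) := ⟨h1, h2⟩
          rw [ins_ok hokk]
          exact ⟨List.isChain_cons_cons.mpr ⟨hokk, hn⟩, fun c hs hch =>
            List.isChain_cons_cons.mpr ⟨str_ok hp hs, List.isChain_cons_cons.mpr ⟨hokk, hn⟩⟩⟩

/-- cancel identity -/
lemma ins_ins_cancel {p : ℕ} (hp : 1 ≤ p) :
    ∀ s : List (ℕ × Bool), GNorm p s → ∀ i (d : Bool),
      ins p (i, d) (ins p (i, !d) s) = s := by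
  intro s
  induction s with
  | nil =>
    intro _ i d
    cases d
    · exact ins_cancel_t rfl []
    · exact ins_cancel_f rfl []
  | cons b t ih =>
    obtain ⟨m, e⟩ := b
    intro hn i d
    have hnt : GNorm p t := hn.tail
    have IHf : ∀ i', ins p (i', false) (ins p (i', true) t) = t := by
      intro i'; have := ih hnt i' false; simpa using this
    have IHt : ∀ i', ins p (i', true) (ins p (i', false) t) = t := by
      intro i'; have := ih hnt i' true; simpa using this
    cases d <;> simp only [Bool.not_false, Bool.not_true] <;> cases e
    · -- outer (i,false), inner (i,true), head (m,false)
      by_cases h1 : i = m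
      · rw [ins_cancel_f h1 t]; subst h1; exact ins_of_chain hn
      · by_cases h2 : m + p ≤ i
        · rw [ins_neg h2 hp, ins_neg h2 hp, IHf (i + 1 - p)]
        · have hokk : Ok p (i, true) (m, false) := ⟨fun hh => h1 hh.1, h2⟩
          rw [ins_ok hokk, ins_cancel_t rfl]
    · -- outer (i,false), inner (i,true), head (m,true)
      by_cases h2 : m < i
      · rw [ins_pos h2, ins_pos h2, IHf (i + p - 1)]
      · have hokk : Ok p (i, true) (m, true) :=
          ⟨by rintro ⟨-, hh⟩; exact absurd hh (by decide), h2⟩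
        rw [ins_ok hokk, ins_cancel_t rfl]
    · -- outer (i,true), inner (i,false), head (m,false)
      by_cases h2 : m + p ≤ i
      · rw [ins_neg h2 hp, ins_neg h2 hp, IHt (i + 1 - p)]
      · have hokk : Ok p (i, false) (m, false) :=
          ⟨by rintro ⟨-, hh⟩; exact absurd hh (by decide), h2⟩
        rw [ins_ok hokk, ins_cancel_f rfl]
    · -- outer (i,true), inner (i,false), head (m,true)
      by_cases h1 : i = m
      · rw [ins_cancel_t h1 t]; subst h1; exact ins_of_chain hn
      · by_cases h2 : m < i
        · rw [ins_pos h2, ins_pos h2, IHt (i + p - 1)]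
        · have hokk : Ok p (i, false) (m, true) := ⟨fun hh => h1 hh.1, h2⟩
          rw [ins_ok hokk, ins_cancel_f rfl]

/-- pos identity -/
lemma ins_ins_pos {p : ℕ} (hp : 1 ≤ p) :
    ∀ s : List (ℕ × Bool), GNorm p s → ∀ i j (d : Bool), i < j →
      ins p (j, d) (ins p (i, true) s) = ins p (i, true) (ins p (j + p - 1, d) s) := by
  intro s
  induction s with
  | nil =>
    intro _ i j d hij
    show ins p (j, d) [(i, true)] = ins p (i, true) [(j + p - 1, d)]
    rw [ins_pos hij]
    have hokk : Ok p (i, true) (j + p - 1, d) := by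
      cases d
      · exact ⟨by rintro ⟨hh, -⟩; omega, by omega⟩
      · exact ⟨by rintro ⟨hh, -⟩; omega, by omega⟩
    rw [ins_ok hokk]
    rfl
  | cons b t ih =>
    obtain ⟨m, e⟩ := b
    intro hn i j d hij
    have hnt : GNorm p t := hn.tail
    cases e
    · -- head (m, false)
      by_cases h1 : i = m
      · subst h1
        rw [ins_cancel_f rfl t, ins_neg (by omega : i + p ≤ j + p - 1) hp]
        have he : j + p - 1 + 1 - p = j := by omega
        rw [he, ins_cancel_f rfl _]
      · by_cases h2 : m + p ≤ i
        · rw [ins_neg h2 hp, ins_neg (by omega : m + p ≤ j) hp,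
            ins_neg (by omega : m + p ≤ j + p - 1) hp, ins_neg h2 hp]
          have he : j + p - 1 + 1 - p = j + 1 - p + p - 1 := by omega
          rw [he, ih hnt (i + 1 - p) (j + 1 - p) d (by omega)]
        · have hokk : Ok p (i, true) (m, false) := ⟨fun hh => h1 hh.1, h2⟩
          rw [ins_ok hokk, ins_pos hij]
          have hstr : Str p (i, true) (j + p - 1, d) := Or.inl ⟨rfl, by omega⟩
          have hch : List.Chain' (Ok p) ((i, true) :: (m, false) :: t) :=
            List.isChain_cons_cons.mpr ⟨hokk, hn⟩
          rw [ins_of_chain ((ins_norm hp _ hn (j + p - 1, d)).2 (i, true) hstr hch)]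
    · -- head (m, true)
      by_cases h2 : m < i
      · rw [ins_pos h2, ins_pos (by omega : m < j), ins_pos (by omega : m < j + p - 1),
          ins_pos h2, ih hnt (i + p - 1) (j + p - 1) d (by omega)]
      · have hokk : Ok p (i, true) (m, true) :=
          ⟨by rintro ⟨-, hh⟩; exact absurd hh (by decide), h2⟩
        rw [ins_ok hokk, ins_pos hij]
        have hstr : Str p (i, true) (j + p - 1, d) := Or.inl ⟨rfl, by omega⟩
        have hch : List.Chain' (Ok p) ((i, true) :: (m, true) :: t) :=
          List.isChain_cons_cons.mpr ⟨hokk, hn⟩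
        rw [ins_of_chain ((ins_norm hp _ hn (j + p - 1, d)).2 (i, true) hstr hch)]

/-- neg identity -/
lemma ins_ins_neg {p : ℕ} (hp : 1 ≤ p) :
    ∀ s : List (ℕ × Bool), GNorm p s → ∀ i j (d : Bool), i < j →
      ins p (j + p - 1, d) (ins p (i, false) s) = ins p (i, false) (ins p (j, d) s) := by
  intro s
  induction s with
  | nil =>
    intro _ i j d hij
    show ins p (j + p - 1, d) [(i, false)] = ins p (i, false) [(j, d)]
    rw [ins_neg (by omega : i + p ≤ j + p - 1) hp]
    have he : j + p - 1 + 1 - p = j := by omega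
    rw [he]
    have hokk : Ok p (i, false) (j, d) := by
      cases d
      · exact ⟨by rintro ⟨hh, -⟩; omega, by omega⟩
      · exact ⟨by rintro ⟨hh, -⟩; omega, by omega⟩
    rw [ins_ok hokk]
    rfl
  | cons b t ih =>
    obtain ⟨m, e⟩ := b
    intro hn i j d hij
    have hnt : GNorm p t := hn.tail
    cases e
    · -- head (m, false)
      by_cases h2 : m + p ≤ i
      · rw [ins_neg h2 hp, ins_neg (by omega : m + p ≤ j + p - 1) hp,
          ins_neg (by omega : m + p ≤ j) hp, ins_neg h2 hp]
        have he : j + p - 1 + 1 - p = j + 1 - p + p - 1 := by omega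
        rw [he, ih hnt (i + 1 - p) (j + 1 - p) d (by omega)]
      · have hokk : Ok p (i, false) (m, false) :=
          ⟨by rintro ⟨-, hh⟩; exact absurd hh (by decide), h2⟩
        rw [ins_ok hokk, ins_neg (by omega : i + p ≤ j + p - 1) hp]
        have he : j + p - 1 + 1 - p = j := by omega
        rw [he]
        have hstr : Str p (i, false) (j, d) := Or.inr ⟨rfl, hij⟩
        have hch : List.Chain' (Ok p) ((i, false) :: (m, false) :: t) :=
          List.isChain_cons_cons.mpr ⟨hokk, hn⟩
        rw [ins_of_chain ((ins_norm hp _ hn (j, d)).2 (i, false) hstr hch)]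
    · -- head (m, true)
      by_cases h1 : i = m
      · subst h1
        rw [ins_cancel_t rfl t, ins_pos hij, ins_cancel_t rfl _]
      · by_cases h2 : m < i
        · rw [ins_pos h2, ins_pos (by omega : m < j + p - 1), ins_pos (by omega : m < j),
            ins_pos h2, ← ih hnt (i + p - 1) (j + p - 1) d (by omega)]
        · have hokk : Ok p (i, false) (m, true) := ⟨fun hh => h1 hh.1, h2⟩
          rw [ins_ok hokk, ins_neg (by omega : i + p ≤ j + p - 1) hp]
          have he : j + p - 1 + 1 - p = j := by omega
          rw [he]
          have hstr : Str p (i, false) (j, d) := Or.inr ⟨rfl, hij⟩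
          have hch : List.Chain' (Ok p) ((i, false) :: (m, true) :: t) :=
            List.isChain_cons_cons.mpr ⟨hokk, hn⟩
          rw [ins_of_chain ((ins_norm hp _ hn (j, d)).2 (i, false) hstr hch)]

lemma nf_norm {p : ℕ} (hp : 1 ≤ p) (w : List (ℕ × Bool)) : GNorm p (nf p w) := by
  induction w with
  | nil => exact List.isChain_nil
  | cons a t ih => exact (ins_norm hp _ ih a).1

lemma step_nf {p : ℕ} (hp : 1 ≤ p) {w w' : List (ℕ × Bool)}
    (h : GammaStep p w w') : nf p w = nf p w' := by
  obtain ⟨u, v, l, r, hr, hw, hw'⟩ := h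
  subst hw; subst hw'
  have key : nf p (l ++ v) = nf p (r ++ v) := by
    have hnv : GNorm p (nf p v) := nf_norm hp v
    cases hr with
    | cancel i ε =>
      show ins p (i, ε) (ins p (i, !ε) (nf p v)) = nf p v
      exact ins_ins_cancel hp _ hnv i ε
    | pos i j ε hij =>
      show ins p (j, ε) (ins p (i, true) (nf p v)) =
        ins p (i, true) (ins p (j + p - 1, ε) (nf p v))
      exact ins_ins_pos hp _ hnv i j ε hij
    | neg i j ε hij =>
      show ins p (j + p - 1, ε) (ins p (i, false) (nf p v)) =
        ins p (i, false) (ins p (j, ε) (nf p v))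
      exact ins_ins_neg hp _ hnv i j ε hij
  have h1 : ∀ z : List (ℕ × Bool), nf p (u ++ z) = List.foldr (ins p) (nf p z) u := by
    intro z
    show (u ++ z).foldr (ins p) [] = _
    rw [List.foldr_append]
    rfl
  rw [List.append_assoc, List.append_assoc, h1, h1, key]

lemma rtg_nf {p : ℕ} (hp : 1 ≤ p) {w v : List (ℕ × Bool)}
    (h : Relation.ReflTransGen (GammaStep p) w v) : nf p w = nf p v := by
  induction h with
  | refl => rfl
  | tail _ hstep ih => exact ih.trans (step_nf hp hstep)

lemma step_cons {p : ℕ} {a : ℕ × Bool} {t u : List (ℕ × Bool)}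
    (h : GammaStep p t u) : GammaStep p (a :: t) (a :: u) := by
  obtain ⟨u', v', l, r, hr, ht, hu⟩ := h
  exact ⟨a :: u', v', l, r, hr, by simp [ht], by simp [hu]⟩

lemma irred_ok {p : ℕ} (hp : 2 ≤ p) {a b : ℕ × Bool} {t : List (ℕ × Bool)}
    (irr : ∀ u, ¬ GammaStep p (a :: b :: t) u) : Ok p a b := by
  obtain ⟨am, ad⟩ := a; obtain ⟨bm, bd⟩ := b
  cases bd
  · refine ⟨?_, ?_⟩
    · rintro ⟨h1, h2⟩
      subst h1; subst h2
      exact irr t ⟨[], t, _, _, GammaRule.cancel am true, by simp, by simp⟩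
    · intro h2
      have hj : bm < am + 1 - p := by omega
      have heq : am + 1 - p + p - 1 = am := by omega
      exact irr _ ⟨[], t, _, _, GammaRule.neg bm (am + 1 - p) ad hj, by
        rw [heq]; rfl, rfl⟩
  · refine ⟨?_, ?_⟩
    · rintro ⟨h1, h2⟩
      subst h1; subst h2
      exact irr t ⟨[], t, _, _, GammaRule.cancel am false, by simp, by simp⟩
    · intro h2
      exact irr _ ⟨[], t, _, _, GammaRule.pos bm am ad h2, rfl, rfl⟩

lemma irred_nf {p : ℕ} (hp : 2 ≤ p) : ∀ v : List (ℕ × Bool),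
    (∀ u, ¬ GammaStep p v u) → nf p v = v := by
  intro v
  induction v with
  | nil => intro _; rfl
  | cons a t ih =>
    intro irr
    have irrt : ∀ u, ¬ GammaStep p t u := fun u hu => irr _ (step_cons hu)
    have hnft : nf p t = t := ih irrt
    show ins p a (nf p t) = a :: t
    rw [hnft]
    cases t with
    | nil => obtain ⟨am, ad⟩ := a; rfl
    | cons b t' => exact ins_ok (irred_ok hp irr) t'

/-- `Γ(p)` is confluent: if a word rewrites (in several steps) to two
irreducible words, they coincide; hence irreducible forms are unique. -/
theorem stmt2 (p : ℕ) (hp : 2 ≤ p) (w v₁ v₂ : List (ℕ × Bool))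
    (h₁ : Relation.ReflTransGen (GammaStep p) w v₁)
    (h₂ : Relation.ReflTransGen (GammaStep p) w v₂)
    (irr₁ : ∀ u, ¬ GammaStep p v₁ u) (irr₂ : ∀ u, ¬ GammaStep p v₂ u) :
    v₁ = v₂ := by
  have hp1 : 1 ≤ p := by omega
  calc v₁ = nf p v₁ := (irred_nf hp v₁ irr₁).symm
    _ = nf p w := (rtg_nf hp1 h₁).symm
    _ = nf p v₂ := rtg_nf hp1 h₂
    _ = v₂ := irred_nf hp v₂ irr₂
end

section
/- The evaluation map from N_inf(p) to the generalized Thompson group F(p), sending a word x_{i_1}^{ε_1} x_{i_2}^{ε_2} ⋯ x_{i_m}^{ε_m} to the corresponding product in F(p), is a bijection: every element g ∈ F(p) is represented by exactly one word of N_inf(p). -/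
/-- `N_inf(p)`: words `x_{i_1}^{ε_1} ⋯ x_{i_m}^{ε_m}` (letters encoded as
pairs `(i, ε)` with `ε : Bool`, `true` = `+1`) such that each pair of
consecutive letters satisfies one of:
(a) `i_k < i_{k+1}`; (b) `i_k = i_{k+1}` and `ε_k = ε_{k+1}`;
(c) `0 < i_k − i_{k+1} < p` and `ε_{k+1} = −1`. -/
def NInf (p : ℕ) (w : List (ℕ × Bool)) : Prop :=
  List.Chain' (fun a b : ℕ × Bool =>
    a.1 < b.1 ∨ (a.1 = b.1 ∧ a.2 = b.2) ∨
    (b.1 < a.1 ∧ a.1 - b.1 < p ∧ b.2 = false)) w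

def evalWord (p : ℕ) (w : List (ℕ × Bool)) : FP p :=
  (w.map fun a => if a.2 then xgen p a.1 else (xgen p a.1)⁻¹).prod

section Relations

variable {p : ℕ}

theorem semiconjBy_xgen {i j : ℕ} (h : i < j) :
    SemiconjBy (xgen p i) (xgen p (j + p - 1)) (xgen p j) := by
  have hrel : (FreeGroup.of j * FreeGroup.of i * (FreeGroup.of i * FreeGroup.of (j + p - 1))⁻¹ :
      FreeGroup ℕ) ∈ ThompsonRels p := ⟨i, j, h, by simp only [mul_inv_rev, mul_assoc]⟩
  have := PresentedGroup.mk_eq_mk_of_mul_inv_mem hrel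
  simp only [map_mul] at this
  exact this.symm

def evalLetter (p : ℕ) (a : ℕ × Bool) : FP p := if a.2 then xgen p a.1 else (xgen p a.1)⁻¹

theorem evalWord_cons (a : ℕ × Bool) (w : List (ℕ × Bool)) :
    evalWord p (a :: w) = evalLetter p a * evalWord p w := by
  simp [evalWord, evalLetter]

theorem evalLetter_mul_evalLetter_of_ne (i : ℕ) {ε δ : Bool} (h : δ ≠ ε) :
    evalLetter p (i, ε) * evalLetter p (i, δ) = 1 := by
  cases ε <;> cases δ <;> simp_all [evalLetter]

end Relations

namespace NInf

variable {p : ℕ}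

def Compat (p : ℕ) (a b : ℕ × Bool) : Prop :=
  a.1 < b.1 ∨ (a.1 = b.1 ∧ a.2 = b.2) ∨ (b.1 < a.1 ∧ a.1 - b.1 < p ∧ b.2 = false)

instance : DecidableRel (Compat p) := fun _ _ => by unfold Compat; infer_instance

theorem compat_of_lt {a b : ℕ × Bool} (h : a.1 < b.1) : Compat p a b := Or.inl h

theorem compat_self (a : ℕ × Bool) : Compat p a a := Or.inr (Or.inl ⟨rfl, rfl⟩)

theorem compat_or_cancel_or_passes (i m : ℕ) (ε δ : Bool) :
    Compat p (i, ε) (m, δ) ∨ (m = i ∧ δ ≠ ε) ∨ (m < i ∧ (δ = false → p ≤ i - m)) := by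
  grind [Compat]

theorem not_compat_of_ne (i : ℕ) {ε δ : Bool} (h : δ ≠ ε) : ¬ Compat p (i, ε) (i, δ) := by
  grind [Compat]

theorem not_compat_of_lt {i m : ℕ} {ε δ : Bool} (hm : m < i) (hδ : δ = false → p ≤ i - m) :
    ¬ Compat p (i, ε) (m, δ) := by
  grind [Compat]

theorem compat_of_compat_of_lt {a b c : ℕ × Bool} (hab : Compat p a b) (hc : c.1 < a.1)
    (hcp : c.2 = true → p ≤ a.1 - c.1) : Compat p c b := by
  grind [Compat]

/-- For `m < i` (and `p ≤ i - m` if `δ = false`), `x_i^ε x_m^δ = x_m^δ x_{shiftPast p δ i}^ε`. -/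
def shiftPast (p : ℕ) : Bool → ℕ → ℕ
  | true, i => i + p - 1
  | false, i => i - (p - 1)

/-- The normal form of `a · w` for `w ∈ N_inf(p)`. -/
def normCons (p : ℕ) : ℕ × Bool → List (ℕ × Bool) → List (ℕ × Bool)
  | a, [] => [a]
  | a, b :: t =>
    if Compat p a b then a :: b :: t
    else if a.1 = b.1 then t
    else b :: normCons p (shiftPast p b.2 a.1, a.2) t

theorem normCons_nil (a : ℕ × Bool) : normCons p a [] = [a] := rfl

theorem normCons_cons_of_compat {a b : ℕ × Bool} (t : List (ℕ × Bool)) (h : Compat p a b) :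
    normCons p a (b :: t) = a :: b :: t := by
  rw [normCons, if_pos h]

theorem normCons_cons_of_ne (i : ℕ) {ε δ : Bool} (t : List (ℕ × Bool)) (h : δ ≠ ε) :
    normCons p (i, ε) ((i, δ) :: t) = t := by
  rw [normCons, if_neg (not_compat_of_ne i h), if_pos rfl]

theorem normCons_cons_of_lt {i m : ℕ} {ε δ : Bool} (t : List (ℕ × Bool)) (hm : m < i)
    (hδ : δ = false → p ≤ i - m) :
    normCons p (i, ε) ((m, δ) :: t) = (m, δ) :: normCons p (shiftPast p δ i, ε) t := by
  rw [normCons, if_neg (not_compat_of_lt hm hδ), if_neg (show i ≠ m by omega)]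

theorem normCons_cons_true {i m : ℕ} {ε : Bool} (t : List (ℕ × Bool)) (hm : m < i) :
    normCons p (i, ε) ((m, true) :: t) = (m, true) :: normCons p (i + p - 1, ε) t :=
  normCons_cons_of_lt t hm (by simp)

theorem normCons_cons_false {i m : ℕ} {ε : Bool} (t : List (ℕ × Bool)) (hm : m < i)
    (hgap : p ≤ i - m) :
    normCons p (i, ε) ((m, false) :: t) = (m, false) :: normCons p (i - (p - 1), ε) t :=
  normCons_cons_of_lt t hm fun _ => hgap

theorem normCons_of_forall_head {a : ℕ × Bool} {w : List (ℕ × Bool)}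
    (h : ∀ b ∈ w.head?, Compat p a b) : normCons p a w = a :: w := by
  cases w with
  | nil => rfl
  | cons b t => exact normCons_cons_of_compat t (h b rfl)

theorem compat_head_normCons {c : ℕ × Bool} {k : ℕ} {ε : Bool} {t : List (ℕ × Bool)}
    (ht : t.IsChain (Compat p)) (hc : ∀ b ∈ t.head?, Compat p c b) (hk : c.1 < k)
    (hcp : c.2 = true → p ≤ k - c.1) : ∀ b ∈ (normCons p (k, ε) t).head?, Compat p c b := by
  cases t with
  | nil =>
    simp only [normCons_nil, List.head?_cons, Option.mem_def, Option.some.injEq]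
    rintro b rfl
    exact compat_of_lt hk
  | cons b t =>
    obtain ⟨m, δ⟩ := b
    rcases compat_or_cancel_or_passes k m ε δ with h | ⟨rfl, hδ⟩ | ⟨hm, hδ⟩
    · rw [normCons_cons_of_compat t h]
      simpa using compat_of_lt hk
    · rw [normCons_cons_of_ne _ t hδ]
      intro b hb
      exact compat_of_compat_of_lt ((List.isChain_cons.mp ht).1 b hb) hk hcp
    · rw [normCons_cons_of_lt t hm hδ]
      simpa using hc _ rfl

theorem lt_shiftPast (hp : 0 < p) {i m : ℕ} {δ : Bool} (hm : m < i)
    (hδ : δ = false → p ≤ i - m) :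
    m < shiftPast p δ i ∧ (δ = true → p ≤ shiftPast p δ i - m) := by
  cases δ <;> grind [shiftPast]

theorem isChain_normCons (hp : 0 < p) (a : ℕ × Bool) {w : List (ℕ × Bool)}
    (hw : w.IsChain (Compat p)) : (normCons p a w).IsChain (Compat p) := by
  induction w generalizing a with
  | nil => exact List.isChain_singleton a
  | cons b t ih =>
    obtain ⟨i, ε⟩ := a; obtain ⟨m, δ⟩ := b
    rcases compat_or_cancel_or_passes i m ε δ with h | ⟨rfl, hδ⟩ | ⟨hm, hδ⟩
    · rw [normCons_cons_of_compat t h]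
      exact List.isChain_cons_cons.mpr ⟨h, hw⟩
    · rw [normCons_cons_of_ne _ t hδ]
      exact hw.tail
    · rw [normCons_cons_of_lt t hm hδ]
      obtain ⟨hlt, hgap⟩ := lt_shiftPast hp hm hδ
      exact List.isChain_cons.mpr
        ⟨compat_head_normCons hw.tail (List.isChain_cons.mp hw).1 hlt hgap, ih _ hw.tail⟩

theorem semiconjBy_evalLetter_shiftPast (hp : 0 < p) {i m : ℕ} (ε δ : Bool) (hm : m < i)
    (hδ : δ = false → p ≤ i - m) :
    SemiconjBy (evalLetter p (m, δ)) (evalLetter p (shiftPast p δ i, ε))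
      (evalLetter p (i, ε)) := by
  suffices SemiconjBy (evalLetter p (m, δ)) (xgen p (shiftPast p δ i)) (xgen p i) by
    cases ε
    · exact this.inv_right
    · exact this
  cases δ
  · have hlt : m < i - (p - 1) := by have := hδ rfl; omega
    have := semiconjBy_xgen (p := p) hlt
    rw [show i - (p - 1) + p - 1 = i by omega] at this
    exact SemiconjBy.inv_symm_left this
  · exact semiconjBy_xgen hm

theorem evalWord_normCons (hp : 0 < p) (a : ℕ × Bool) (w : List (ℕ × Bool)) :
    evalWord p (normCons p a w) = evalLetter p a * evalWord p w := by
  induction w generalizing a with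
  | nil => rfl
  | cons b t ih =>
    obtain ⟨i, ε⟩ := a; obtain ⟨m, δ⟩ := b
    rcases compat_or_cancel_or_passes i m ε δ with h | ⟨rfl, hδ⟩ | ⟨hm, hδ⟩
    · rw [normCons_cons_of_compat t h, evalWord_cons]
    · rw [normCons_cons_of_ne _ t hδ, evalWord_cons, ← mul_assoc,
        evalLetter_mul_evalLetter_of_ne _ hδ, one_mul]
    · rw [normCons_cons_of_lt t hm hδ, evalWord_cons, ih, evalWord_cons, ← mul_assoc,
        ← mul_assoc, (semiconjBy_evalLetter_shiftPast hp ε δ hm hδ).eq]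

theorem normCons_not_normCons (i : ℕ) (ε : Bool) {w : List (ℕ × Bool)}
    (hw : w.IsChain (Compat p)) : normCons p (i, !ε) (normCons p (i, ε) w) = w := by
  induction w generalizing i ε with
  | nil => exact normCons_cons_of_ne i [] (by simp)
  | cons b t ih =>
    obtain ⟨m, δ⟩ := b
    rcases compat_or_cancel_or_passes i m ε δ with h | ⟨rfl, hδ⟩ | ⟨hm, hδ⟩
    · rw [normCons_cons_of_compat t h, normCons_cons_of_ne i _ (by simp)]
    · obtain rfl := Bool.eq_not.mpr hδ
      rw [normCons_cons_of_ne m t hδ, normCons_of_forall_head (List.isChain_cons.mp hw).1]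
    · rw [normCons_cons_of_lt t hm hδ, normCons_cons_of_lt _ hm hδ, ih _ _ hw.tail]

theorem normCons_braid (hp : 0 < p) {i j : ℕ} (hij : i < j) {w : List (ℕ × Bool)}
    (hw : w.IsChain (Compat p)) :
    normCons p (j, true) (normCons p (i, true) w) =
      normCons p (i, true) (normCons p (j + p - 1, true) w) := by
  induction w generalizing i j with
  | nil => rw [normCons_nil, normCons_nil, normCons_cons_true _ hij, normCons_nil,
      normCons_cons_of_compat _ (compat_of_lt (show i < j + p - 1 by omega))]
  | cons b t ih =>
    obtain ⟨m, δ⟩ := b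
    rcases lt_trichotomy i m with him | rfl | hmi
    · rw [normCons_cons_of_compat _ (compat_of_lt him), normCons_cons_true _ hij,
        normCons_of_forall_head (compat_head_normCons hw (by simpa using compat_of_lt him)
          (by omega) (fun _ => by omega))]
    · cases δ
      · rw [normCons_cons_of_ne _ t (by simp), normCons_cons_false t (by omega) (by omega),
          show j + p - 1 - (p - 1) = j by omega, normCons_cons_of_ne _ _ (by simp)]
      · rw [normCons_cons_of_compat _ (compat_self _), normCons_cons_true _ hij,
          normCons_cons_true _ (by omega), normCons_cons_of_compat _ (compat_self _)]
    · cases δ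
      · by_cases hnear : i - m < p
        · have hc : Compat p (i, true) (m, false) := Or.inr (Or.inr ⟨hmi, hnear, rfl⟩)
          rw [normCons_cons_of_compat _ hc, normCons_cons_true _ hij,
            normCons_cons_false t (by omega) (by omega), normCons_cons_of_compat _ hc]
        · have := ih (i := i - (p - 1)) (j := j - (p - 1)) (by omega) hw.tail
          rw [normCons_cons_false t hmi (by omega), normCons_cons_false _ (by omega) (by omega),
            normCons_cons_false t (by omega) (by omega), normCons_cons_false _ hmi (by omega),
            this, show j - (p - 1) + p - 1 = j by omega, show j + p - 1 - (p - 1) = j by omega]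
      · rw [normCons_cons_true t hmi, normCons_cons_true _ (by omega),
          normCons_cons_true t (by omega), normCons_cons_true _ hmi, ih (by omega) hw.tail]

def normConsPerm (hp : 0 < p) (i : ℕ) : Equiv.Perm {w // NInf p w} where
  toFun w := ⟨normCons p (i, true) w.1, isChain_normCons hp _ w.2⟩
  invFun w := ⟨normCons p (i, false) w.1, isChain_normCons hp _ w.2⟩
  left_inv w := Subtype.ext (normCons_not_normCons i true w.2)
  right_inv w := Subtype.ext (normCons_not_normCons i false w.2)

def normalFormAction (hp : 0 < p) : FP p →* Equiv.Perm {w // NInf p w} :=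
  PresentedGroup.toGroup (f := normConsPerm hp) <| by
    rintro _ ⟨i, j, hij, rfl⟩
    have hbraid : normConsPerm hp j * normConsPerm hp i =
        normConsPerm hp i * normConsPerm hp (j + p - 1) :=
      Equiv.ext fun w => Subtype.ext (normCons_braid hp hij w.2)
    simp only [map_mul, map_inv, FreeGroup.lift_apply_of, hbraid]
    group

theorem normalFormAction_evalLetter_apply (hp : 0 < p) (a : ℕ × Bool) (w : {w // NInf p w}) :
    (normalFormAction hp (evalLetter p a) w).1 = normCons p a w.1 := by
  obtain ⟨i, _ | _⟩ := a <;>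
    simp [evalLetter, normalFormAction, xgen, PresentedGroup.toGroup.of, normConsPerm]

theorem normalFormAction_evalWord_apply_nil (hp : 0 < p) (w : {w // NInf p w}) :
    normalFormAction hp (evalWord p w.1) ⟨[], List.isChain_nil⟩ = w := by
  obtain ⟨w, hw⟩ := w
  induction w with
  | nil => rfl
  | cons a w ih =>
    apply Subtype.ext
    rw [evalWord_cons, map_mul, Equiv.Perm.mul_apply, ih hw.tail,
      normalFormAction_evalLetter_apply, normCons_of_forall_head (List.isChain_cons.mp hw).1]

theorem evalWord_normalFormAction_apply_nil (hp : 0 < p) (g : FP p) :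
    evalWord p (normalFormAction hp g ⟨[], List.isChain_nil⟩).1 = g := by
  have hstep : ∀ (a : ℕ × Bool) (g : FP p),
      evalWord p (normalFormAction hp g ⟨[], List.isChain_nil⟩).1 = g →
      evalWord p (normalFormAction hp (evalLetter p a * g) ⟨[], List.isChain_nil⟩).1 =
        evalLetter p a * g := by
    intro a g hg
    rw [map_mul, Equiv.Perm.mul_apply, normalFormAction_evalLetter_apply,
      evalWord_normCons hp, hg]
  have hg : g ∈ Subgroup.closure (Set.range (xgen p)) := by
    rw [show xgen p = PresentedGroup.of from rfl, PresentedGroup.closure_range_of]; trivial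
  induction hg using Subgroup.closure_induction_left with
  | one => rfl
  | mul_left _ hx y _ hy =>
    obtain ⟨i, rfl⟩ := hx
    exact hstep (i, true) y hy
  | inv_mul_cancel _ hx y _ hy =>
    obtain ⟨i, rfl⟩ := hx
    exact hstep (i, false) y hy

end NInf

/-- Every element of `F(p)` is represented by exactly one word of `N_inf(p)`. -/
theorem stmt3 (p : ℕ) (hp : 2 ≤ p) :
    Function.Bijective
      (fun w : {w : List (ℕ × Bool) // NInf p w} => evalWord p w.1) := by
  have hp₀ : 0 < p := by omega
  exact Function.bijective_iff_has_inverse.mpr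
    ⟨fun g => NInf.normalFormAction hp₀ g ⟨[], List.isChain_nil⟩,
      NInf.normalFormAction_evalWord_apply_nil hp₀, NInf.evalWord_normalFormAction_apply_nil hp₀⟩
end

section
/- If w ∈ N_inf(p), then the word 𝑤̄ (the image of w under the bar map) contains no forbidden subword; that is, 𝑤̄ belongs to N_fin(p). -/
/-- Cancel (exhaustively) all adjacent pairs `x_0^ε x_0^{−ε}` in a word. -/
def reduce0 : List (ℕ × Bool) → List (ℕ × Bool)
  | [] => []
  | a :: l =>
    match reduce0 l with
    | [] => [a]
    | b :: t => if a.1 = 0 ∧ b.1 = 0 ∧ a.2 = !b.2 then t else a :: b :: t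

/-- Expansion of a letter: `x_j^ε` with `j = r + d(p−1)`, `1 ≤ r ≤ p−1`,
`d ≥ 0`, becomes `x_0^{−d} x_r^ε x_0^{d}`; the letter `x_0^{±1}` is unchanged. -/
def letterExpand (p : ℕ) (a : ℕ × Bool) : List (ℕ × Bool) :=
  if a.1 = 0 then [a]
  else
    List.replicate ((a.1 - 1) / (p - 1)) ((0 : ℕ), false) ++
      [((a.1 - 1) % (p - 1) + 1, a.2)] ++
      List.replicate ((a.1 - 1) / (p - 1)) ((0 : ℕ), true)

/-- The bar map: expand every letter and freely cancel adjacent pairs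
`x_0^ε x_0^{−ε}`. -/
def barMap (p : ℕ) (w : List (ℕ × Bool)) : List (ℕ × Bool) :=
  reduce0 ((w.map (letterExpand p)).flatten)

/-- The forbidden subwords (1)–(5). -/
def Forbidden (p : ℕ) (u : List (ℕ × Bool)) : Prop :=
  (∃ (i : ℕ) (ε : Bool), i ≤ p - 1 ∧ u = [(i, ε), (i, !ε)]) ∨
  (∃ (α β k : ℕ) (ε : Bool), 1 ≤ β ∧ β < α ∧ α ≤ p - 1 ∧
    u = (α, ε) :: (List.replicate k ((0 : ℕ), true) ++ [(β, true)])) ∨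
  (∃ (α β k : ℕ) (ε : Bool), 1 ≤ β ∧ β < α ∧ α ≤ p - 1 ∧
    u = (α, ε) :: (List.replicate (k + 1) ((0 : ℕ), true) ++ [(β, false)])) ∨
  (∃ (α β k : ℕ) (ε : Bool), 1 ≤ α ∧ α ≤ β ∧ β ≤ p - 1 ∧
    u = (α, ε) :: (List.replicate (k + 1) ((0 : ℕ), true) ++ [(β, true)])) ∨
  (∃ (α β k : ℕ) (ε : Bool), 1 ≤ α ∧ α ≤ β ∧ β ≤ p - 1 ∧
    u = (α, ε) :: (List.replicate (k + 2) ((0 : ℕ), true) ++ [(β, false)]))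

/-- `N_fin(p)`: words over `x_0^{±1}, …, x_{p−1}^{±1}` with no forbidden
subword. -/
def NFin (p : ℕ) (w : List (ℕ × Bool)) : Prop :=
  (∀ a ∈ w, a.1 ≤ p - 1) ∧ ∀ u, u <:+: w → ¬ Forbidden p u

/-!
Free reduction only merges runs of `x_0`, so `w̄ = x_0^z L` where `L` is empty or begins with
some `x_r^{±1}`, `r ≥ 1`. Prepending `x_j^ε ↦ x_0^{-d} x_r^ε x_0^d` turns this into
`x_0^{-d} x_r^ε x_0^{d+z} L`. Every forbidden subword other than `x_0^ε x_0^{-ε}` is a letter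
`x_α`, `α ≥ 1`, a run of positive `x_0` and the next letter `x_β`, so the only place a new one
could appear is the junction `x_r^ε x_0^{d+z} L`. The `N_inf(p)` condition between `x_j` and the
next letter of `w` forces `d + z < 0`, or `d + z ∈ {0, 1}` with exactly the harmless next letters.
-/

lemma eq_of_replicate_append_singleton_prefix {α : Type*} {c b : α} {L : List α}
    (hb : b ≠ c) (hL : ∀ x ∈ L.head?, x ≠ c) :
    ∀ {k n : ℕ}, List.replicate k c ++ [b] <+: List.replicate n c ++ L → k = n ∧ b ∈ L.head?
  | 0, 0, h => ⟨rfl, by simpa [List.singleton_prefix_iff_head?_eq_some] using h⟩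
  | 0, n + 1, h => absurd (by simpa [List.replicate_succ] using h) hb
  | k + 1, 0, h => by
    cases L with
    | nil => simp at h
    | cons x L => exact absurd (List.cons_prefix_cons.mp h).1.symm (hL x rfl)
  | k + 1, n + 1, h => by
    simp only [List.replicate_succ, List.cons_append, List.cons_prefix_cons] at h
    simpa using eq_of_replicate_append_singleton_prefix hb hL h.2

def x0pow : ℤ → List (ℕ × Bool)
  | .ofNat n => List.replicate n (0, true)
  | .negSucc n => List.replicate (n + 1) (0, false)

lemma x0pow_natCast (n : ℕ) : x0pow n = List.replicate n (0, true) := rfl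

@[simp] lemma x0pow_zero : x0pow 0 = [] := rfl

lemma x0pow_neg_natCast (n : ℕ) : x0pow (-n) = List.replicate n (0, false) := by
  cases n <;> rfl

def HeadNeZero (L : List (ℕ × Bool)) : Prop := ∀ x ∈ L.head?, x.1 ≠ 0

lemma headNeZero_cons {a : ℕ × Bool} (ha : a.1 ≠ 0) (l : List (ℕ × Bool)) :
    HeadNeZero (a :: l) := by
  simpa [HeadNeZero] using ha

def reduceCons (a : ℕ × Bool) : List (ℕ × Bool) → List (ℕ × Bool)
  | [] => [a]
  | b :: t => if a.1 = 0 ∧ b.1 = 0 ∧ a.2 = !b.2 then t else a :: b :: t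

lemma reduce0_append (l m : List (ℕ × Bool)) :
    reduce0 (l ++ m) = l.foldr reduceCons (reduce0 m) := by
  induction l with
  | nil => rfl
  | cons a l ih => rw [List.cons_append, List.foldr_cons, ← ih]; rfl

lemma barMap_cons (p : ℕ) (a : ℕ × Bool) (w : List (ℕ × Bool)) :
    barMap p (a :: w) = (letterExpand p a).foldr reduceCons (barMap p w) := by
  rw [barMap, List.map_cons, List.flatten_cons, reduce0_append, barMap]

lemma reduceCons_of_ne_zero {a : ℕ × Bool} (ha : a.1 ≠ 0) (l : List (ℕ × Bool)) :
    reduceCons a l = a :: l := by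
  cases l <;> simp [reduceCons, ha]

lemma reduceCons_zero_of_headNeZero {L : List (ℕ × Bool)} (hL : HeadNeZero L) (s : Bool) :
    reduceCons (0, s) L = (0, s) :: L := by
  cases L with
  | nil => rfl
  | cons b t => simp [reduceCons, hL b rfl]

lemma reduceCons_true_x0pow {L : List (ℕ × Bool)} (hL : HeadNeZero L) (z : ℤ) :
    reduceCons (0, true) (x0pow z ++ L) = x0pow (1 + z) ++ L := by
  obtain ⟨n, rfl | rfl⟩ := z.eq_nat_or_neg
  · rw [show 1 + (n : ℤ) = (n + 1 : ℕ) by push_cast; ring, x0pow_natCast, x0pow_natCast]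
    cases n
    · exact reduceCons_zero_of_headNeZero hL true
    · simp [reduceCons, List.replicate_succ]
  · cases n with
    | zero => exact reduceCons_zero_of_headNeZero hL true
    | succ n =>
      rw [show 1 + -((n + 1 : ℕ) : ℤ) = -n by push_cast; ring, x0pow_neg_natCast,
        x0pow_neg_natCast]
      simp [reduceCons, List.replicate_succ]

lemma reduceCons_false_x0pow {L : List (ℕ × Bool)} (hL : HeadNeZero L) (z : ℤ) :
    reduceCons (0, false) (x0pow z ++ L) = x0pow (-1 + z) ++ L := by
  obtain ⟨n, rfl | rfl⟩ := z.eq_nat_or_neg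
  · cases n with
    | zero => exact reduceCons_zero_of_headNeZero hL false
    | succ n =>
      rw [show -1 + ((n + 1 : ℕ) : ℤ) = n by push_cast; ring, x0pow_natCast, x0pow_natCast]
      simp [reduceCons, List.replicate_succ]
  · rw [show -1 + -(n : ℤ) = -(n + 1 : ℕ) by push_cast; ring, x0pow_neg_natCast,
      x0pow_neg_natCast]
    cases n
    · exact reduceCons_zero_of_headNeZero hL false
    · simp [reduceCons, List.replicate_succ]

lemma foldr_reduceCons_x0pow {L : List (ℕ × Bool)} (hL : HeadNeZero L) (z z' : ℤ) :
    (x0pow z).foldr reduceCons (x0pow z' ++ L) = x0pow (z + z') ++ L := by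
  obtain ⟨n, rfl | rfl⟩ := z.eq_nat_or_neg
  · induction n with
    | zero => simp
    | succ n ih =>
      rw [x0pow_natCast, List.replicate_succ, List.foldr_cons, ← x0pow_natCast, ih,
        reduceCons_true_x0pow hL]
      push_cast; ring_nf
  · induction n with
    | zero => simp
    | succ n ih =>
      rw [x0pow_neg_natCast, List.replicate_succ, List.foldr_cons, ← x0pow_neg_natCast, ih,
        reduceCons_false_x0pow hL]
      push_cast; ring_nf

lemma not_forbidden_nil (p : ℕ) : ¬ Forbidden p [] := by
  rintro (⟨_, _, _, h⟩ | ⟨_, _, _, _, _, _, _, h⟩ | ⟨_, _, _, _, _, _, _, h⟩ |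
    ⟨_, _, _, _, _, _, _, h⟩ | ⟨_, _, _, _, _, _, _, h⟩) <;> simp at h

lemma Forbidden.eq_of_cons_zero {p : ℕ} {s : Bool} {t : List (ℕ × Bool)}
    (h : Forbidden p ((0, s) :: t)) : t = [(0, !s)] := by
  rcases h with ⟨_, _, _, h⟩ | ⟨_, _, _, _, _, _, _, h⟩ | ⟨_, _, _, _, _, _, _, h⟩ |
    ⟨_, _, _, _, _, _, _, h⟩ | ⟨_, _, _, _, _, _, _, h⟩ <;> simp at h <;> grind

lemma Forbidden.exists_of_cons {p : ℕ} {a : ℕ × Bool} {t : List (ℕ × Bool)}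
    (h : Forbidden p (a :: t)) (ha : a.1 ≠ 0) :
    ∃ k b, b.1 ≠ 0 ∧ t = List.replicate k (0, true) ++ [b] := by
  rcases h with ⟨i, ε, _, h⟩ | ⟨_, β, k, _, _, _, _, h⟩ | ⟨_, β, k, _, _, _, _, h⟩ |
    ⟨_, β, k, _, _, _, _, h⟩ | ⟨_, β, k, _, _, _, _, h⟩ <;> simp only [List.cons.injEq] at h
  · exact ⟨0, (i, !ε), by simpa [h.1] using ha, by simp [h.2]⟩
  all_goals exact ⟨_, _, by omega, h.2⟩

lemma NFin.cons {p : ℕ} {a : ℕ × Bool} {l : List (ℕ × Bool)} (ha : a.1 ≤ p - 1)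
    (hl : NFin p l) (h : ∀ t, t <+: l → ¬ Forbidden p (a :: t)) : NFin p (a :: l) := by
  refine ⟨by simpa [ha] using hl.1, fun u hu => ?_⟩
  rcases List.infix_cons_iff.mp hu with hu | hu
  · rcases List.prefix_cons_iff.mp hu with rfl | ⟨t, rfl, ht⟩
    exacts [not_forbidden_nil p, h t ht]
  · exact hl.2 u hu

lemma NFin.replicate_append {p : ℕ} {L : List (ℕ × Bool)} (hL : NFin p L)
    (hL0 : HeadNeZero L) (s : Bool) (n : ℕ) :
    NFin p (List.replicate n (0, s) ++ L) := by
  induction n with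
  | zero => exact hL
  | succ n ih =>
    refine NFin.cons (Nat.zero_le _) ih fun t ht hF => ?_
    obtain rfl := hF.eq_of_cons_zero
    cases n with
    | zero => simpa using hL0 _ (List.singleton_prefix_iff_head?_eq_some.mp ht)
    | succ n => simp [List.replicate_succ] at ht

lemma NFin.x0pow_append {p : ℕ} {L : List (ℕ × Bool)} (hL : NFin p L)
    (hL0 : HeadNeZero L) (z : ℤ) : NFin p (x0pow z ++ L) := by
  obtain ⟨n, rfl | rfl⟩ := z.eq_nat_or_neg
  · exact hL.replicate_append hL0 true n
  · rw [x0pow_neg_natCast]; exact hL.replicate_append hL0 false n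

lemma NFin.cons_x0pow_append {p r : ℕ} {ε : Bool} {e : ℤ} {L : List (ℕ × Bool)}
    (hr : r ≠ 0) (hrp : r ≤ p - 1) (hL : NFin p L) (hL0 : HeadNeZero L)
    (hgap : ∀ b ∈ L.head?, 0 ≤ e →
      ¬ Forbidden p ((r, ε) :: (List.replicate e.toNat (0, true) ++ [b]))) :
    NFin p ((r, ε) :: (x0pow e ++ L)) := by
  refine NFin.cons hrp (hL.x0pow_append hL0 e) fun t ht hF => ?_
  obtain ⟨k, b, hb, rfl⟩ := hF.exists_of_cons hr
  cases e with
  | ofNat n =>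
    obtain ⟨rfl, hbL⟩ := eq_of_replicate_append_singleton_prefix (c := ((0 : ℕ), true))
      (by grind) (fun x hx => by grind [HeadNeZero]) ht
    exact hgap b hbL (Int.natCast_nonneg k) (by simpa using hF)
  | negSucc n =>
    cases k <;> simp [x0pow, List.replicate_succ] at ht
    exact hb (congrArg Prod.fst ht)

/-- A letter `x_j` with `j ≥ 1` is written `j = r + d (p - 1)`, `1 ≤ r ≤ p - 1`; these are
`d = letterDepth p j` and `r = letterResidue p j`. -/
def letterDepth (p j : ℕ) : ℕ := (j - 1) / (p - 1)

def letterResidue (p j : ℕ) : ℕ := (j - 1) % (p - 1) + 1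

lemma letterResidue_le {p : ℕ} (hp : 2 ≤ p) (j : ℕ) : letterResidue p j ≤ p - 1 :=
  Nat.mod_lt _ (by omega)

lemma letterResidue_add_depth_mul {j : ℕ} (hj : j ≠ 0) (p : ℕ) :
    letterResidue p j + letterDepth p j * (p - 1) = j := by
  have := Nat.mod_add_div' (j - 1) (p - 1)
  unfold letterResidue letterDepth
  omega

lemma letterDepth_mono (p : ℕ) {j j' : ℕ} (h : j ≤ j') : letterDepth p j ≤ letterDepth p j' :=
  Nat.div_le_div_right (by omega)

lemma letterDepth_residue_of_lt {p j j' : ℕ} (hj : j ≠ 0) (h : j < j') :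
    letterDepth p j < letterDepth p j' ∨
      letterDepth p j = letterDepth p j' ∧ letterResidue p j < letterResidue p j' := by
  rcases (letterDepth_mono p h.le).lt_or_eq with hd | hd
  · exact Or.inl hd
  · have := letterResidue_add_depth_mul hj p
    have := letterResidue_add_depth_mul (show j' ≠ 0 by omega) p
    rw [hd] at *
    omega

lemma letterDepth_residue_of_lt_of_sub_lt {p j j' : ℕ} (hp : 2 ≤ p) (hj' : j' ≠ 0)
    (h : j' < j) (hjp : j - j' < p) :
    letterDepth p j = letterDepth p j' ∧ letterResidue p j' < letterResidue p j ∨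
      letterDepth p j = letterDepth p j' + 1 ∧ letterResidue p j ≤ letterResidue p j' := by
  have hj : j ≠ 0 := by omega
  have hle : letterDepth p j ≤ letterDepth p j' + 1 := by
    calc letterDepth p j ≤ (j' - 1 + (p - 1)) / (p - 1) := Nat.div_le_div_right (by omega)
      _ = letterDepth p j' + 1 := Nat.add_div_right _ (by omega)
  have hdec := letterResidue_add_depth_mul hj p
  have hdec' := letterResidue_add_depth_mul hj' p
  rcases (letterDepth_mono p h.le).lt_or_eq with hd | hd
  · have hd : letterDepth p j = letterDepth p j' + 1 := by omega
    rw [hd, add_one_mul] at hdec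
    have := letterResidue_le hp j'
    exact Or.inr ⟨hd, by omega⟩
  · rw [← hd] at hdec
    exact Or.inl ⟨hd.symm, by omega⟩

lemma not_forbidden_pair {p r r' : ℕ} {ε ε' : Bool}
    (hlt : ¬ (r' < r ∧ ε' = true)) (hinv : ¬ (r' = r ∧ ε' = !ε)) :
    ¬ Forbidden p [(r, ε), (r', ε')] := by
  rintro (⟨_, _, _, h⟩ | ⟨_, _, k, _, _, _, _, h⟩ | ⟨_, _, k, _, _, _, _, h⟩ |
    ⟨_, _, k, _, _, _, _, h⟩ | ⟨_, _, k, _, _, _, _, h⟩) <;>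
    have hlen := congrArg List.length h <;> simp at hlen
  · simp only [List.cons.injEq, Prod.mk.injEq] at h; grind
  · subst hlen; simp at h; grind

lemma not_forbidden_gap_one {p r r' : ℕ} {ε : Bool} (h : r ≤ r') :
    ¬ Forbidden p [(r, ε), (0, true), (r', false)] := by
  rintro (⟨_, _, _, h⟩ | ⟨_, _, k, _, _, _, _, h⟩ | ⟨_, _, k, _, _, _, _, h⟩ |
    ⟨_, _, k, _, _, _, _, h⟩ | ⟨_, _, k, _, _, _, _, h⟩) <;>
    have hlen := congrArg List.length h <;> simp at hlen
  all_goals subst hlen; simp at h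
  all_goals omega

def NInfRel (p : ℕ) (a b : ℕ × Bool) : Prop :=
  a.1 < b.1 ∨ (a.1 = b.1 ∧ a.2 = b.2) ∨ (b.1 < a.1 ∧ a.1 - b.1 < p ∧ b.2 = false)

lemma NInf.rel {p : ℕ} {a b : ℕ × Bool} {w : List (ℕ × Bool)} (h : NInf p (a :: b :: w)) :
    NInfRel p a b :=
  (List.isChain_cons_cons.mp h).1

lemma not_forbidden_of_nInfRel {p j j' : ℕ} {ε ε' : Bool} (hp : 2 ≤ p) (hj : j ≠ 0)
    (hj' : j' ≠ 0) (hrel : NInfRel p (j, ε) (j', ε'))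
    (hd : letterDepth p j' ≤ letterDepth p j) :
    ¬ Forbidden p ((letterResidue p j, ε) :: (List.replicate
      (letterDepth p j - letterDepth p j') (0, true) ++ [(letterResidue p j', ε')])) := by
  simp only [NInfRel] at hrel
  rcases hrel with hlt | ⟨heq, rfl⟩ | ⟨hlt, hjp, rfl⟩
  · rcases letterDepth_residue_of_lt (p := p) hj hlt with hd' | ⟨hd', hr⟩
    · omega
    · rw [hd', Nat.sub_self]
      exact not_forbidden_pair (by omega) (by omega)
  · obtain rfl : j = j' := heq
    rw [Nat.sub_self]
    exact not_forbidden_pair (by omega) (by simp)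
  · rcases letterDepth_residue_of_lt_of_sub_lt hp hj' hlt hjp with ⟨hd', hr⟩ | ⟨hd', hr⟩
    · rw [hd', Nat.sub_self]
      exact not_forbidden_pair (by simp) (by omega)
    · rw [hd', Nat.add_sub_cancel_left]
      exact not_forbidden_gap_one hr

lemma letterExpand_of_ne_zero (p : ℕ) {j : ℕ} (hj : j ≠ 0) (ε : Bool) :
    letterExpand p (j, ε) =
      x0pow (-letterDepth p j) ++ (letterResidue p j, ε) :: x0pow (letterDepth p j) := by
  rw [x0pow_neg_natCast, x0pow_natCast]
  simp [letterExpand, hj, letterDepth, letterResidue]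

section barMap

variable {p : ℕ} {w L : List (ℕ × Bool)} {z : ℤ}

lemma barMap_cons_zero_true (hw : barMap p w = x0pow z ++ L) (hL0 : HeadNeZero L) :
    barMap p ((0, true) :: w) = x0pow (1 + z) ++ L := by
  rw [barMap_cons, hw]
  exact reduceCons_true_x0pow hL0 z

lemma barMap_cons_zero_false (hw : barMap p w = x0pow z ++ L) (hL0 : HeadNeZero L) :
    barMap p ((0, false) :: w) = x0pow (-1 + z) ++ L := by
  rw [barMap_cons, hw]
  exact reduceCons_false_x0pow hL0 z

lemma barMap_cons_of_ne_zero {j : ℕ} (hj : j ≠ 0) (ε : Bool)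
    (hw : barMap p w = x0pow z ++ L) (hL0 : HeadNeZero L) :
    barMap p ((j, ε) :: w) = x0pow (-letterDepth p j) ++
      (letterResidue p j, ε) :: (x0pow (letterDepth p j + z) ++ L) := by
  have hr : (letterResidue p j, ε).1 ≠ 0 := Nat.succ_ne_zero _
  rw [barMap_cons, hw, letterExpand_of_ne_zero p hj, List.foldr_append, List.foldr_cons,
    foldr_reduceCons_x0pow hL0, reduceCons_of_ne_zero hr]
  simpa using foldr_reduceCons_x0pow (L := (letterResidue p j, ε) :: _)
    (headNeZero_cons hr _) (-letterDepth p j) 0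

end barMap

lemma nFin_nil (p : ℕ) : NFin p [] :=
  ⟨by simp, fun u hu => by rw [List.infix_nil.mp hu]; exact not_forbidden_nil p⟩

/-- The data about `barMap p w = x0pow z ++ L` that is visible from the first letter of `w`:
it is what decides whether a letter put in front of `w` creates a forbidden subword. -/
def BarShape (p : ℕ) : List (ℕ × Bool) → ℤ → List (ℕ × Bool) → Prop
  | [], z, L => z = 0 ∧ L = []
  | (0, true) :: _, _, _ => True
  | (0, false) :: _, z, _ => z < 0
  | (j + 1, ε) :: _, z, L =>
    z = -letterDepth p (j + 1) ∧ L.head? = some (letterResidue p (j + 1), ε)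

section BarShape

variable {p : ℕ} {w L : List (ℕ × Bool)} {z : ℤ}

lemma BarShape.nonpos_of_nInf_cons_zero_false (hw : NInf p ((0, false) :: w))
    (hs : BarShape p w z L) : z ≤ 0 := by
  match w, hw, hs with
  | [], _, hs => exact hs.1.le
  | (0, true) :: _, hw, _ => have := hw.rel; simp [NInfRel] at this
  | (0, false) :: _, _, hs => exact hs.le
  | (_ + 1, _) :: _, _, hs => simp [BarShape] at hs; omega

lemma BarShape.not_forbidden_junction (hp : 2 ≤ p) {j : ℕ} {ε : Bool}
    (hw : NInf p ((j + 1, ε) :: w)) (hs : BarShape p w z L) :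
    ∀ b ∈ L.head?, 0 ≤ letterDepth p (j + 1) + z →
      ¬ Forbidden p ((letterResidue p (j + 1), ε) ::
        (List.replicate (letterDepth p (j + 1) + z).toNat (0, true) ++ [b])) := by
  match w, hw, hs with
  | [], _, hs => simp [hs.2]
  | (0, s) :: _, hw, hs =>
    obtain ⟨hjp, rfl⟩ : j + 1 < p ∧ s = false := by
      rcases hw.rel with h | h | h <;> simp at h
      omega
    have hd : letterDepth p (j + 1) = 0 := Nat.div_eq_of_lt (by omega)
    intro b _ hz
    change z < 0 at hs
    omega
  | (j' + 1, ε') :: _, hw, ⟨hz, hL⟩ =>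
    rw [hL, hz]
    rintro _ ⟨⟩ hd
    rw [show (letterDepth p (j + 1) + -(letterDepth p (j' + 1) : ℤ)).toNat =
      letterDepth p (j + 1) - letterDepth p (j' + 1) by omega]
    exact not_forbidden_of_nInfRel hp (by omega) (by omega) hw.rel (by omega)

theorem exists_barMap_eq_x0pow_append (hp : 2 ≤ p) :
    ∀ w, NInf p w → ∃ z L, barMap p w = x0pow z ++ L ∧ HeadNeZero L ∧ NFin p L ∧
      BarShape p w z L
  | [], _ => ⟨0, [], rfl, by simp [HeadNeZero], nFin_nil p, rfl, rfl⟩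
  | (0, true) :: w, hw => by
    obtain ⟨z, L, hbar, hL0, hL, -⟩ := exists_barMap_eq_x0pow_append hp w hw.tail
    exact ⟨1 + z, L, barMap_cons_zero_true hbar hL0, hL0, hL, trivial⟩
  | (0, false) :: w, hw => by
    obtain ⟨z, L, hbar, hL0, hL, hs⟩ := exists_barMap_eq_x0pow_append hp w hw.tail
    refine ⟨-1 + z, L, barMap_cons_zero_false hbar hL0, hL0, hL, ?_⟩
    have := hs.nonpos_of_nInf_cons_zero_false hw
    change -1 + z < 0
    omega
  | (j + 1, ε) :: w, hw => by
    obtain ⟨z, L, hbar, hL0, hL, hs⟩ := exists_barMap_eq_x0pow_append hp w hw.tail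
    refine ⟨_, _, barMap_cons_of_ne_zero j.succ_ne_zero ε hbar hL0,
      headNeZero_cons (Nat.succ_ne_zero _) _, ?_, rfl, rfl⟩
    exact NFin.cons_x0pow_append (Nat.succ_ne_zero _) (letterResidue_le hp _) hL hL0
      (hs.not_forbidden_junction hp hw)

end BarShape

/-- If `w ∈ N_inf(p)` then `w̄` contains no forbidden subword. -/
theorem stmt4 (p : ℕ) (hp : 2 ≤ p) (w : List (ℕ × Bool)) (hw : NInf p w) :
    NFin p (barMap p w) := by
  obtain ⟨z, L, hbar, hL0, hL, -⟩ := exists_barMap_eq_x0pow_append hp w hw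
  rw [hbar]
  exact hL.x0pow_append hL0 z
end

section
/- For every 0 ≤ i ≤ p−1 one has the identity of formal power series (1 − x³M)^{i} · (x²·(M_1 M_2 ⋯ M_i) − x² + 1) = 1, where M_1 ⋯ M_0 denotes the empty product 1. (Equivalently, M_1 ⋯ M_i = x^{-2}(1 − x³M)^{-i} + 1 − x^{-2}.) -/
open PowerSeries

/-- Lemma 4.1: for all `0 ≤ i ≤ p−1`,
`M_1 ⋯ M_i = x^{−2}(1 − x³M)^{−i} + 1 − x^{−2}`, stated without inverses as
`(1 − x³M)^i (x²(M_1⋯M_i) − x² + 1) = 1`. -/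
theorem stmt7 (p : ℕ) (hp : 2 ≤ p) (M : ℕ → PowerSeries ℚ)
    (hM : ∀ i, 1 ≤ i → i ≤ p - 1 →
      M i - 1 = X * (∏ j ∈ Finset.Icc i (p - 1), M j) +
        X ^ 3 * (∏ j ∈ Finset.Icc i (p - 1), M j) *
          ((∏ j ∈ Finset.Icc 1 i, M j) - 1)) :
    ∀ i ≤ p - 1,
      (1 - X ^ 3 * ∏ j ∈ Finset.Icc 1 (p - 1), M j) ^ i *
        (X ^ 2 * (∏ j ∈ Finset.Icc 1 i, M j) - X ^ 2 + 1) = 1 := by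
  intro i hi
  induction i with
  | zero => simp
  | succ n ih =>
    have hn : n ≤ p - 1 := Nat.le_of_succ_le hi
    have hIH := ih hn
    have h1 : 1 ≤ n + 1 := Nat.succ_le_succ (Nat.zero_le n)
    have hfe := hM (n + 1) h1 hi
    have hP : ∏ j ∈ Finset.Icc 1 (n + 1), M j
        = (∏ j ∈ Finset.Icc 1 n, M j) * M (n + 1) :=
      Finset.prod_Icc_succ_top h1 M
    have hQ : (∏ j ∈ Finset.Icc 1 n, M j) * (∏ j ∈ Finset.Icc (n + 1) (p - 1), M j)
        = ∏ j ∈ Finset.Icc 1 (p - 1), M j := by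
      have e1 : Finset.Icc 1 n = Finset.Ioc 0 n := rfl
      have e2 : Finset.Icc (n + 1) (p - 1) = Finset.Ioc n (p - 1) := by
        rw [Finset.Icc_add_one_left_eq_Ioc]
      have e3 : Finset.Icc 1 (p - 1) = Finset.Ioc 0 (p - 1) := rfl
      rw [e1, e2, e3]
      exact Finset.prod_Ioc_consecutive M (Nat.zero_le n) hn
    rw [hP] at hfe ⊢
    set A := ∏ j ∈ Finset.Icc 1 n, M j
    set B := M (n + 1)
    set Q := ∏ j ∈ Finset.Icc (n + 1) (p - 1), M j
    set Mf := ∏ j ∈ Finset.Icc 1 (p - 1), M j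
    linear_combination hIH + (1 - X ^ 3 * Mf) ^ n * X ^ 2 *
      (A * hfe + ((X : PowerSeries ℚ) + X ^ 3 * (A * B - 1)) * hQ)
end

section
/- The formal power series M satisfies (1 − x³M)^{p−1} · (x²M − x² + 1) = 1. (Equivalently, x²M = (1 − x³M)^{-(p−1)} + x² − 1.) -/
/-!
Write `u = 1 - x³M` and `Pᵢ = Mᵢ ⋯ M_{p-1}`. Since `Pᵢ · M₁ ⋯ Mᵢ = M · Mᵢ`, the functional
equation for `Mᵢ` reads `Mᵢ u = 1 + (x - x³) Pᵢ`, i.e. `1 / Pᵢ = u / P_{i+1} - (x - x³)`.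
Iterating from `P_p = 1` down to `P₁ = M` gives
`1 / M = u^{p-1} - (x - x³)(1 + u + ⋯ + u^{p-2})`, and since `u - 1 = -x³M` the geometric sum
collapses to the claimed identity. No division is needed, so the identity holds in every
commutative ring.
-/

open PowerSeries

section

open Finset

variable {R : Type*} [CommRing R]

/-- Inverse-free form of iterating `1 / P i = u / P (i + 1) - t`. -/
theorem mul_one_add_geom_sum_mul_eq_pow_mul (u t : R) (P : ℕ → R) (n : ℕ)
    (h : ∀ i < n, P i * u = P (i + 1) * (1 + t * P i)) :
    P n * (1 + t * (∑ j ∈ range n, u ^ j) * P 0) = u ^ n * P 0 := by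
  induction n with
  | zero => simp
  | succ n ih =>
    rw [geom_sum_succ']
    linear_combination (u - P (n + 1) * t) * ih (fun i hi => h i (by omega)) -
      (1 + t * (∑ j ∈ range n, u ^ j) * P 0) * h n n.lt_succ_self

theorem prod_Icc_mul_one_sub_eq (x : R) (M : ℕ → R) {n : ℕ}
    (hM : ∀ i, 1 ≤ i → i ≤ n →
      M i - 1 = x * (∏ j ∈ Icc i n, M j) +
        x ^ 3 * (∏ j ∈ Icc i n, M j) * ((∏ j ∈ Icc 1 i, M j) - 1))
    {i : ℕ} (hi : i < n) :
    (∏ j ∈ Icc (i + 1) n, M j) * (1 - x ^ 3 * ∏ j ∈ Icc 1 n, M j) =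
      (∏ j ∈ Icc (i + 1 + 1) n, M j) * (1 + (x - x ^ 3) * ∏ j ∈ Icc (i + 1) n, M j) := by
  have hsplit : ∏ j ∈ Icc (i + 1) n, M j = M (i + 1) * ∏ j ∈ Icc (i + 1 + 1) n, M j := by
    have h := prod_Ioc_consecutive M (Nat.le_add_right i 1) hi
    rw [Nat.Ioc_succ_singleton, prod_singleton] at h
    simpa only [← Icc_add_one_left_eq_Ioc] using h.symm
  have hwhole :
      (∏ j ∈ Icc 1 (i + 1), M j) * ∏ j ∈ Icc (i + 1 + 1) n, M j = ∏ j ∈ Icc 1 n, M j := by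
    simpa only [← Icc_add_one_left_eq_Ioc, zero_add] using
      prod_Ioc_consecutive M (Nat.zero_le (i + 1)) hi
  have h := hM (i + 1) le_add_self hi
  rw [hsplit] at h ⊢
  linear_combination (∏ j ∈ Icc (i + 1 + 1) n, M j) * h +
    x ^ 3 * M (i + 1) * (∏ j ∈ Icc (i + 1 + 1) n, M j) * hwhole

theorem one_sub_pow_mul_eq_one_of_functional_eq (x : R) (M : ℕ → R) (n : ℕ)
    (hM : ∀ i, 1 ≤ i → i ≤ n →
      M i - 1 = x * (∏ j ∈ Icc i n, M j) +
        x ^ 3 * (∏ j ∈ Icc i n, M j) * ((∏ j ∈ Icc 1 i, M j) - 1)) :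
    (1 - x ^ 3 * ∏ j ∈ Icc 1 n, M j) ^ n *
      (x ^ 2 * (∏ j ∈ Icc 1 n, M j) - x ^ 2 + 1) = 1 := by
  have h := mul_one_add_geom_sum_mul_eq_pow_mul (1 - x ^ 3 * ∏ j ∈ Icc 1 n, M j) (x - x ^ 3)
    (fun i => ∏ j ∈ Icc (i + 1) n, M j) n (fun i hi => prod_Icc_mul_one_sub_eq x M hM hi)
  have hg := geom_sum_mul (1 - x ^ 3 * ∏ j ∈ Icc 1 n, M j) n
  simp only [Icc_eq_empty_of_lt n.lt_succ_self, prod_empty, zero_add, one_mul] at h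
  linear_combination -x ^ 2 * h + (x ^ 2 - 1) * hg

end

theorem stmt8_general (p : ℕ) (M : ℕ → PowerSeries ℚ)
    (hM : ∀ i, 1 ≤ i → i ≤ p - 1 →
      M i - 1 = X * (∏ j ∈ Finset.Icc i (p - 1), M j) +
        X ^ 3 * (∏ j ∈ Finset.Icc i (p - 1), M j) *
          ((∏ j ∈ Finset.Icc 1 i, M j) - 1)) :
    (1 - X ^ 3 * ∏ j ∈ Finset.Icc 1 (p - 1), M j) ^ (p - 1) *
      (X ^ 2 * (∏ j ∈ Finset.Icc 1 (p - 1), M j) - X ^ 2 + 1) = 1 :=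
  one_sub_pow_mul_eq_one_of_functional_eq X M (p - 1) hM

/-- Corollary 4.2: `M = M_1 ⋯ M_{p−1}` satisfies
`x²M = (1 − x³M)^{−(p−1)} + x² − 1`, stated without inverses as
`(1 − x³M)^{p−1} (x²M − x² + 1) = 1`. -/
theorem stmt8 (p : ℕ) (hp : 2 ≤ p) (M : ℕ → PowerSeries ℚ)
    (hM : ∀ i, 1 ≤ i → i ≤ p - 1 →
      M i - 1 = X * (∏ j ∈ Finset.Icc i (p - 1), M j) +
        X ^ 3 * (∏ j ∈ Finset.Icc i (p - 1), M j) *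
          ((∏ j ∈ Finset.Icc 1 i, M j) - 1)) :
    (1 - X ^ 3 * ∏ j ∈ Finset.Icc 1 (p - 1), M j) ^ (p - 1) *
      (X ^ 2 * (∏ j ∈ Finset.Icc 1 (p - 1), M j) - X ^ 2 + 1) = 1 :=
  stmt8_general p M hM
end

section
/- Suppose in addition that L, R, S ∈ ℚ[[x]] satisfy L − 1 = x·L·M, R = M_{p-1} + x²·(M·R − M_{p-1}), and S = L · (M_1 M_2 ⋯ M_{p-2}) · R. Then S · (1 − xM) · (1 − x²M) = (1 − x²) · M. -/
open PowerSeries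

/-- Formula (11): with `L − 1 = xLM`, `R = M_{p−1} + x²(MR − M_{p−1})` and
`S = L (M_1⋯M_{p−2}) R`, one has `S (1 − xM)(1 − x²M) = (1 − x²) M`. -/
theorem stmt9 (p : ℕ) (hp : 2 ≤ p) (M : ℕ → PowerSeries ℚ)
    (L R S : PowerSeries ℚ)
    (hM : ∀ i, 1 ≤ i → i ≤ p - 1 →
      M i - 1 = X * (∏ j ∈ Finset.Icc i (p - 1), M j) +
        X ^ 3 * (∏ j ∈ Finset.Icc i (p - 1), M j) *
          ((∏ j ∈ Finset.Icc 1 i, M j) - 1))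
    (hL : L - 1 = X * L * ∏ j ∈ Finset.Icc 1 (p - 1), M j)
    (hR : R = M (p - 1) +
      X ^ 2 * ((∏ j ∈ Finset.Icc 1 (p - 1), M j) * R - M (p - 1)))
    (hS : S = L * (∏ j ∈ Finset.Icc 1 (p - 2), M j) * R) :
    S * (1 - X * ∏ j ∈ Finset.Icc 1 (p - 1), M j) *
        (1 - X ^ 2 * ∏ j ∈ Finset.Icc 1 (p - 1), M j) =
      (1 - X ^ 2) * ∏ j ∈ Finset.Icc 1 (p - 1), M j := by
  have h1 : p - 1 = (p - 2) + 1 := by omega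
  have hprod : (∏ j ∈ Finset.Icc 1 (p - 1), M j) =
      (∏ j ∈ Finset.Icc 1 (p - 2), M j) * M (p - 1) := by
    rw [h1, Finset.prod_Icc_succ_top (by omega)]
  set P := ∏ j ∈ Finset.Icc 1 (p - 1), M j
  set Q := ∏ j ∈ Finset.Icc 1 (p - 2), M j
  linear_combination ((1 - X * P) * (1 - X ^ 2 * P)) * hS +
    (Q * R * (1 - X ^ 2 * P)) * hL + Q * hR - (1 - X ^ 2 : PowerSeries ℚ) * hprod
end

section
/- Suppose in addition that N ∈ ℚ[[x]] satisfies N · (1 − x³M) = 1. Then x·N^p + (x³ − x − 1)·N + 1 = 0. -/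
/-!
Write `P = M₁ ⋯ M_{p-1}`, `Tᵢ = M_{i+1} ⋯ M_{p-1}` and `c = x - x³`. Multiplying the equation
for `Mᵢ` by `N` and using `x³PN = N - 1` turns it into `Mᵢ (1 - cN Tᵢ) = N`, that is
`T_{i-1} (1 - cN Tᵢ) = N Tᵢ`. This first-order recurrence, started at `T_{p-1} = 1`, is solved
in closed form: `Tᵢ (1 - N - cN (1 - N^k)) = N^k (1 - N)` with `k = p - 1 - i`. At `i = 0` this
is an equation for `P`, and eliminating `x³P` with `N (1 - x³P) = 1` leaves `P` times the claimed
identity. All `Tᵢ` are units since `N` is, so `P` can be cancelled.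
-/

open PowerSeries Finset

section Recurrence

variable {R : Type*} [CommRing R] {c N : R} {t : ℕ → R} {n : ℕ}

theorem mul_eq_pow_mul_of_recurrence (h0 : t 0 = 1)
    (hrec : ∀ k < n, t (k + 1) * (1 - c * N * t k) = N * t k) :
    t n * (1 - N - c * N * (1 - N ^ n)) = N ^ n * (1 - N) := by
  induction n with
  | zero => simp [h0]
  | succ n ih =>
    have ih := ih fun k hk => hrec k (by omega)
    linear_combination (1 - N - c * N * (1 - N ^ n)) * hrec n n.lt_add_one +
      (c * N * t (n + 1) + N) * ih

theorem isUnit_of_recurrence (hN : IsUnit N) (h0 : t 0 = 1)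
    (hrec : ∀ k < n, t (k + 1) * (1 - c * N * t k) = N * t k) : IsUnit (t n) := by
  induction n with
  | zero => simp [h0]
  | succ n ih =>
    have hunit : IsUnit (N * t n) := hN.mul (ih fun k hk => hrec k (by omega))
    exact isUnit_of_mul_isUnit_left (hrec n n.lt_add_one ▸ hunit)

end Recurrence

section TailProducts

variable {R : Type*} [CommRing R] {M : ℕ → R} {x N : R} {n : ℕ}

theorem mul_one_sub_tail_eq {i : ℕ} (hin : i ≤ n)
    (hMi : M i - 1 = x * (∏ j ∈ Icc i n, M j) +
      x ^ 3 * (∏ j ∈ Icc i n, M j) * ((∏ j ∈ Icc 1 i, M j) - 1))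
    (hN : N * (1 - x ^ 3 * ∏ j ∈ Icc 1 n, M j) = 1) :
    M i * (1 - (x - x ^ 3) * N * ∏ j ∈ Ioc i n, M j) = N := by
  rw [Icc_eq_cons_Ioc hin, prod_cons] at hMi
  have hIcc (m : ℕ) : Icc 1 m = Ioc 0 m := Icc_add_one_left_eq_Ioc 0 m
  rw [hIcc, ← prod_Ioc_consecutive _ (Nat.zero_le i) hin, ← hIcc] at hN
  linear_combination N * hMi - M i * hN

theorem tail_mul_one_sub_eq (hM : ∀ i, 1 ≤ i → i ≤ n →
      M i - 1 = x * (∏ j ∈ Icc i n, M j) +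
        x ^ 3 * (∏ j ∈ Icc i n, M j) * ((∏ j ∈ Icc 1 i, M j) - 1))
    (hN : N * (1 - x ^ 3 * ∏ j ∈ Icc 1 n, M j) = 1) {i : ℕ} (hi : i < n) :
    (∏ j ∈ Ioc i n, M j) * (1 - (x - x ^ 3) * N * ∏ j ∈ Ioc (i + 1) n, M j) =
      N * ∏ j ∈ Ioc (i + 1) n, M j := by
  rw [← Icc_add_one_left_eq_Ioc i, Icc_eq_cons_Ioc hi, prod_cons]
  linear_combination (∏ j ∈ Ioc (i + 1) n, M j) *
    mul_one_sub_tail_eq hi (hM _ (by omega) hi) hN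

end TailProducts

theorem mul_pow_succ_add_mul_add_one_eq_zero {R : Type*} [CommRing R] (n : ℕ) (M : ℕ → R)
    (x N : R)
    (hM : ∀ i, 1 ≤ i → i ≤ n →
      M i - 1 = x * (∏ j ∈ Icc i n, M j) +
        x ^ 3 * (∏ j ∈ Icc i n, M j) * ((∏ j ∈ Icc 1 i, M j) - 1))
    (hN : N * (1 - x ^ 3 * ∏ j ∈ Icc 1 n, M j) = 1) :
    x * N ^ (n + 1) + (x ^ 3 - x - 1) * N + 1 = 0 := by
  set t : ℕ → R := fun k => ∏ j ∈ Ioc (n - k) n, M j with ht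
  have h0 : t 0 = 1 := by simp [ht]
  have hrec : ∀ k < n, t (k + 1) * (1 - (x - x ^ 3) * N * t k) = N * t k :=
    fun k hk => by
      simp only [ht, show n - k = n - (k + 1) + 1 by omega]
      exact tail_mul_one_sub_eq hM hN (by omega)
  have htn : t n = ∏ j ∈ Icc 1 n, M j := by
    simp only [ht, Nat.sub_self]
    rw [← Icc_add_one_left_eq_Ioc, zero_add]
  have hclosed := mul_eq_pow_mul_of_recurrence h0 hrec
  have hunit := isUnit_of_recurrence (IsUnit.of_mul_eq_one _ hN) h0 hrec
  rw [htn] at hclosed hunit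
  refine hunit.mul_left_cancel ?_
  linear_combination hclosed - N ^ n * hN

/-- Equation (13): if `N (1 − x³M) = 1` then `x N^p + (x³ − x − 1) N + 1 = 0`. -/
theorem stmt10 (p : ℕ) (hp : 2 ≤ p) (M : ℕ → PowerSeries ℚ)
    (N : PowerSeries ℚ)
    (hM : ∀ i, 1 ≤ i → i ≤ p - 1 →
      M i - 1 = X * (∏ j ∈ Finset.Icc i (p - 1), M j) +
        X ^ 3 * (∏ j ∈ Finset.Icc i (p - 1), M j) *
          ((∏ j ∈ Finset.Icc 1 i, M j) - 1))
    (hN : N * (1 - X ^ 3 * ∏ j ∈ Finset.Icc 1 (p - 1), M j) = 1) :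
    X * N ^ p + (X ^ 3 - X - 1) * N + 1 = 0 := by
  obtain ⟨n, rfl⟩ : ∃ n, p = n + 1 := ⟨p - 1, by omega⟩
  exact mul_pow_succ_add_mul_add_one_eq_zero n M X N hM hN
end

section
/- Let p ≥ 3 be an integer. If the polynomial t^p − t + 1 is irreducible over ℚ, then the polynomial f(t) = x·t^p + (x³ − x − 1)·t + 1, regarded as a polynomial in t with coefficients in the field ℚ(x) of rational functions, is irreducible over ℚ(x). -/
/-!
The polynomial `f` already lies in `ℚ[x][t]`, where it is primitive because its constant term
is `1`. Setting `x = 1` turns it into `t^p - t + 1` without lowering its degree, so a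
factorization `f = a b` in `ℚ[x][t]` specializes to a factorization of `t^p - t + 1` with factors
of the same degrees as `a` and `b`. Irreducibility of `t^p - t + 1` then makes `a` or `b` a
constant, which is a unit since `f` is primitive. Gauss's lemma carries irreducibility from
`ℚ[x][t]` to `ℚ(x)[t]`.
-/

open Polynomial

namespace Polynomial

variable {R S : Type*} [CommRing R]

theorem isPrimitive_of_isUnit_coeff {f : R[X]} {n : ℕ} (h : IsUnit (f.coeff n)) :
    f.IsPrimitive :=
  fun r hr => isUnit_of_dvd_unit ((C_dvd_iff_dvd_coeff r f).mp hr n) h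

theorem natDegree_X_pow_sub_X_add_one [Nontrivial R] {n : ℕ} (hn : 2 ≤ n) :
    (X ^ n - X + 1 : R[X]).natDegree = n := by
  compute_degree!
  · rw [if_neg (by omega), if_neg (by omega)]
    simp
  · omega

variable [CommRing S] [IsDomain S] {φ : R →+* S} {f : R[X]}

theorem IsPrimitive.isUnit_of_isUnit_map_of_natDegree_eq (hf : f.IsPrimitive)
    (hdeg : (f.map φ).natDegree = f.natDegree) (hu : IsUnit (f.map φ)) : IsUnit f := by
  have h0 : f.natDegree = 0 := hdeg ▸ natDegree_eq_zero_of_isUnit hu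
  rw [eq_C_of_natDegree_eq_zero h0] at hf ⊢
  exact isUnit_C.mpr (isPrimitive_iff_isUnit_of_C_dvd.mp hf _ dvd_rfl)

theorem IsPrimitive.irreducible_of_irreducible_map_of_natDegree_eq [IsDomain R]
    (hf : f.IsPrimitive) (hdeg : (f.map φ).natDegree = f.natDegree)
    (h_irr : Irreducible (f.map φ)) : Irreducible f := by
  refine ⟨fun hu => h_irr.not_isUnit (hu.map (mapRingHom φ)), fun a b hab => ?_⟩
  have hmap : f.map φ = a.map φ * b.map φ := by rw [hab, Polynomial.map_mul]
  have hab0 : a.map φ * b.map φ ≠ 0 := hmap ▸ h_irr.ne_zero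
  have ha0 : a ≠ 0 := by rintro rfl; simp at hab0
  have hb0 : b ≠ 0 := by rintro rfl; simp at hab0
  have hsum : (a.map φ).natDegree + (b.map φ).natDegree = a.natDegree + b.natDegree := by
    rw [← natDegree_mul (left_ne_zero_of_mul hab0) (right_ne_zero_of_mul hab0), ← hmap, hdeg,
      hab, natDegree_mul ha0 hb0]
  -- Mapping cannot raise degrees, so neither factor may lose degree under `φ`.
  have ha_le : (a.map φ).natDegree ≤ a.natDegree := natDegree_map_le
  have hb_le : (b.map φ).natDegree ≤ b.natDegree := natDegree_map_le
  have hda : (a.map φ).natDegree = a.natDegree := by omega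
  have hdb : (b.map φ).natDegree = b.natDegree := by omega
  refine (h_irr.isUnit_or_isUnit hmap).imp ?_ ?_
  · exact (isPrimitive_of_dvd hf (Dvd.intro _ hab.symm)).isUnit_of_isUnit_map_of_natDegree_eq hda
  · exact (isPrimitive_of_dvd hf (Dvd.intro_left _ hab.symm)).isUnit_of_isUnit_map_of_natDegree_eq
      hdb

end Polynomial

/-- `x t^p + (x³ - x - 1) t + 1` with coefficients in `R[x]` instead of `R(x)`; the name refers to
its specialization `t^p - t + 1` at `x = 1`. -/
noncomputable def liftedTrinomial (R : Type*) [CommRing R] (p : ℕ) : R[X][X] :=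
  C X * X ^ p + C (X ^ 3 - X - 1) * X + 1

section liftedTrinomial

variable (R : Type*) [CommRing R] {p : ℕ}

theorem coeff_zero_liftedTrinomial (hp : p ≠ 0) : (liftedTrinomial R p).coeff 0 = 1 := by
  simp [liftedTrinomial, coeff_X_pow, Ne.symm hp]

theorem isPrimitive_liftedTrinomial (hp : p ≠ 0) : (liftedTrinomial R p).IsPrimitive :=
  isPrimitive_of_isUnit_coeff (n := 0) (coeff_zero_liftedTrinomial R hp ▸ isUnit_one)

theorem natDegree_liftedTrinomial [Nontrivial R] (hp : 2 ≤ p) :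
    (liftedTrinomial R p).natDegree = p := by
  unfold liftedTrinomial
  compute_degree!
  · rw [if_neg (by omega), if_neg (by omega)]
    simp [X_ne_zero]
  all_goals omega

theorem map_evalRingHom_one_liftedTrinomial (p : ℕ) :
    (liftedTrinomial R p).map (evalRingHom 1) = X ^ p - X + 1 := by
  simp [liftedTrinomial]
  ring

theorem map_algebraMap_liftedTrinomial (K : Type*) [Field K] (p : ℕ) :
    (liftedTrinomial K p).map (algebraMap K[X] (RatFunc K)) =
      C RatFunc.X * X ^ p + C (RatFunc.X ^ 3 - RatFunc.X - 1) * X + 1 := by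
  simp [liftedTrinomial, RatFunc.algebraMap_X]

theorem irreducible_liftedTrinomial [IsDomain R] (hp : 2 ≤ p)
    (h : Irreducible (X ^ p - X + 1 : R[X])) : Irreducible (liftedTrinomial R p) := by
  rw [← map_evalRingHom_one_liftedTrinomial] at h
  refine (isPrimitive_liftedTrinomial R (by omega)).irreducible_of_irreducible_map_of_natDegree_eq
    ?_ h
  rw [map_evalRingHom_one_liftedTrinomial, natDegree_X_pow_sub_X_add_one hp,
    natDegree_liftedTrinomial R hp]

end liftedTrinomial

/-- If `t^p − t + 1` is irreducible over `ℚ`, then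
`f(t) = x t^p + (x³ − x − 1) t + 1` is irreducible over the field `ℚ(x)` of
rational functions. -/
theorem stmt11 (p : ℕ) (hp : 3 ≤ p)
    (h : Irreducible (Polynomial.X ^ p - Polynomial.X + 1 : Polynomial ℚ)) :
    Irreducible
      (Polynomial.C (RatFunc.X : RatFunc ℚ) * Polynomial.X ^ p +
        Polynomial.C ((RatFunc.X : RatFunc ℚ) ^ 3 - RatFunc.X - 1) * Polynomial.X + 1 :
        Polynomial (RatFunc ℚ)) := by
  rw [← map_algebraMap_liftedTrinomial]
  exact (isPrimitive_liftedTrinomial ℚ (by omega)).irreducible_iff_irreducible_map_fraction_map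
    (K := RatFunc ℚ) |>.mp (irreducible_liftedTrinomial ℚ (by omega) h)
end

section
/- Let p ≥ 3 be an integer and assume the polynomial t^p − t + 1 is irreducible over ℚ. Suppose M_1, …, M_{p-1}, L, R, S ∈ ℚ[[x]] satisfy: for every 1 ≤ i ≤ p−1, M_i − 1 = x·M_i M_{i+1}⋯M_{p-1} + x³·M_i M_{i+1}⋯M_{p-1}·(M_1⋯M_{i-1}M_i − 1); L − 1 = x·L·M; R = M_{p-1} + x²·(M·R − M_{p-1}); and S = L·(M_1⋯M_{p-2})·R, where M = M_1⋯M_{p-1}. Then S is not rational: there do not exist polynomials P, Q ∈ ℚ[x] with Q ≠ 0 and S·Q = P in ℚ[[x]]. -/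
/-!
Write `m = M₁ ⋯ M_{p-1}` and `a = 1 - x³m`. The recursion for the `Mᵢ` says
`Mᵢ a = 1 + (x - x³) Mᵢ ⋯ M_{p-1}`, and telescoping these identities from `i = p - 1` down to
`i = 1` shows `a^p + x = (1 + x - x³) a^(p-1)`. Hence `E = x / a` is a root of
`Y^p - (1 + x - x³) x^(p-2) Y + x^(p-1)`, which is irreducible over `ℚ(x)` by Gauss's lemma,
since at `x = 1` it specialises to `Y^p - Y + 1`; so `E` has degree `p` over `ℚ(x)`.
On the other hand the equations for `L` and `R` give `S (1 - xm)(1 - x²m) = (1 - x²) m`, so if `S`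
were rational then `m`, and with it `E ∈ ℚ(x)(m)`, would have degree at most `2` over `ℚ(x)`.
-/

open scoped LaurentSeries PowerSeries

section ProductRecursion

open Finset

variable {R : Type*} [CommRing R]

lemma prod_Icc_one_mul_prod_Icc (M : ℕ → R) {i n : ℕ} (hi : 1 ≤ i) (hin : i ≤ n) :
    (∏ j ∈ Icc 1 i, M j) * ∏ j ∈ Icc i n, M j = M i * ∏ j ∈ Icc 1 n, M j := by
  obtain ⟨k, rfl⟩ : ∃ k, i = k + 1 := ⟨i - 1, by omega⟩
  have hsplit := prod_Ioc_consecutive M (Nat.zero_le k) (by omega : k ≤ n)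
  rw [← Icc_add_one_left_eq_Ioc, ← Icc_add_one_left_eq_Ioc, ← Icc_add_one_left_eq_Ioc,
    zero_add] at hsplit
  rw [prod_Icc_succ_top (by omega), ← hsplit]
  ring

lemma prod_Icc_mul_geom_sum_eq_one {M : ℕ → R} {a c : R} {n : ℕ}
    (h : ∀ i, 1 ≤ i → i ≤ n → M i * a = 1 + c * ∏ j ∈ Icc i n, M j) :
    (∏ j ∈ Icc 1 n, M j) * (a ^ n - c * ∑ j ∈ range n, a ^ j) = 1 := by
  suffices ∀ k ≤ n,
      (∏ j ∈ Icc (n + 1 - k) n, M j) * (a ^ k - c * ∑ j ∈ range k, a ^ j) = 1 by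
    simpa using this n le_rfl
  intro k hk
  induction k with
  | zero => simp
  | succ k ih =>
    have hsplit : ∏ j ∈ Icc (n - k) n, M j = M (n - k) * ∏ j ∈ Icc (n + 1 - k) n, M j := by
      rw [Icc_eq_cons_Ioc (by omega), prod_cons, ← Icc_add_one_left_eq_Ioc]
      congr 3; omega
    have hstep := h (n - k) (by omega) (by omega)
    rw [hsplit] at hstep
    rw [show n + 1 - (k + 1) = n - k by omega, hsplit, geom_sum_succ]
    linear_combination M (n - k) * a * ih (by omega) + hstep

theorem pow_succ_add_eq_of_prod_recursion {x : R} {M : ℕ → R} {n : ℕ}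
    (hM : ∀ i, 1 ≤ i → i ≤ n → M i - 1 = x * (∏ j ∈ Icc i n, M j) +
      x ^ 3 * (∏ j ∈ Icc i n, M j) * ((∏ j ∈ Icc 1 i, M j) - 1)) :
    (1 - x ^ 3 * ∏ j ∈ Icc 1 n, M j) ^ (n + 1) + x =
      (1 + x - x ^ 3) * (1 - x ^ 3 * ∏ j ∈ Icc 1 n, M j) ^ n := by
  set a := 1 - x ^ 3 * ∏ j ∈ Icc 1 n, M j with ha
  have hstep : ∀ i, 1 ≤ i → i ≤ n → M i * a = 1 + (x - x ^ 3) * ∏ j ∈ Icc i n, M j :=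
    fun i hi hin ↦ by
      linear_combination hM i hi hin + x ^ 3 * prod_Icc_one_mul_prod_Icc M hi hin
  have hgeom := geom_sum_mul a n
  linear_combination (-x ^ 3) * prod_Icc_mul_geom_sum_eq_one hstep + (x - x ^ 3) * hgeom
    + (a ^ n - (x - x ^ 3) * ∑ j ∈ range n, a ^ j) * ha

end ProductRecursion

section DeformedTrinomial

open Polynomial

variable {R S : Type*} [CommRing R] [CommRing S]

noncomputable def deformedTrinomial (τ : R) (n : ℕ) : R[X] :=
  X ^ (n + 1) - C ((1 + τ - τ ^ 3) * τ ^ (n - 1)) * X + C (τ ^ n)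

lemma deformedTrinomial_map (f : R →+* S) (τ : R) (n : ℕ) :
    (deformedTrinomial τ n).map f = deformedTrinomial (f τ) n := by
  simp [deformedTrinomial]

lemma deformedTrinomial_one (n : ℕ) : deformedTrinomial (1 : R) n = X ^ (n + 1) - X + 1 := by
  simp [deformedTrinomial]

lemma monic_deformedTrinomial [Nontrivial R] (τ : R) {n : ℕ} (hn : 1 ≤ n) :
    (deformedTrinomial τ n).Monic := by
  unfold deformedTrinomial
  monicity!
  omega

lemma natDegree_deformedTrinomial [Nontrivial R] (τ : R) {n : ℕ} (hn : 1 ≤ n) :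
    (deformedTrinomial τ n).natDegree = n + 1 := by
  unfold deformedTrinomial
  compute_degree!
  simp [show n ≠ 0 by omega]

lemma irreducible_deformedTrinomial_X {F : Type*} [Field F] {n : ℕ} (hn : 1 ≤ n)
    (hirr : Irreducible (X ^ (n + 1) - X + 1 : F[X])) :
    Irreducible (deformedTrinomial (RatFunc.X : RatFunc F) n) := by
  have hmonic := monic_deformedTrinomial (X : F[X]) hn
  have hirrPoly : Irreducible (deformedTrinomial (X : F[X]) n) := by
    refine hmonic.irreducible_of_irreducible_map (evalRingHom 1) _ ?_
    rwa [deformedTrinomial_map, coe_evalRingHom, eval_X, deformedTrinomial_one]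
  rw [← RatFunc.algebraMap_X, ← deformedTrinomial_map]
  exact hmonic.irreducible_iff_irreducible_map_fraction_map.mp hirrPoly

lemma aeval_div_deformedTrinomial {K L : Type*} [Field K] [Field L] [Algebra K L] (τ : K)
    {a : L} {n : ℕ} (hn : 1 ≤ n) (ha : a ≠ 0)
    (hrec : a ^ (n + 1) + algebraMap K L τ =
      (1 + algebraMap K L τ - algebraMap K L τ ^ 3) * a ^ n) :
    aeval (algebraMap K L τ / a) (deformedTrinomial τ n) = 0 := by
  set t := algebraMap K L τ
  have hpow : ∀ j, (t / a) ^ j * a ^ j = t ^ j := fun j ↦ by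
    rw [← mul_pow, div_mul_cancel₀ t ha]
  obtain ⟨k, rfl⟩ : ∃ k, n = k + 1 := ⟨n - 1, by omega⟩
  apply mul_right_cancel₀ (pow_ne_zero (k + 2) ha)
  simp only [deformedTrinomial, map_add, map_sub, map_mul, map_pow, aeval_X, aeval_C,
    map_one, Nat.add_sub_cancel]
  linear_combination hpow (k + 2) - (1 + t - t ^ 3) * t ^ k * a ^ (k + 1) * hpow 1
    + t ^ (k + 1) * hrec

end DeformedTrinomial

section LaurentSeries

open Polynomial
-- for the scoped instance `RatFunc.liftAlgebra`, making `F⸨X⸩` an algebra over `RatFunc F`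
open scoped RatFunc

lemma natDegree_minpoly_le_of_mem_adjoin {K L : Type*} [Field K] [Field L] [Algebra K L]
    {y z : L} {f : K[X]} (hf : f ≠ 0) (hfy : aeval y f = 0)
    (hz : z ∈ IntermediateField.adjoin K {y}) : (minpoly K z).natDegree ≤ f.natDegree := by
  have hy : IsIntegral K y := IsAlgebraic.isIntegral ⟨f, hf, hfy⟩
  have := IntermediateField.adjoin.finiteDimensional hy
  calc (minpoly K z).natDegree
      = (minpoly K (⟨z, hz⟩ : IntermediateField.adjoin K {y})).natDegree := by
        rw [IntermediateField.minpoly_eq]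
    _ ≤ Module.finrank K (IntermediateField.adjoin K {y}) := minpoly.natDegree_le _
    _ = (minpoly K y).natDegree := IntermediateField.adjoin.finrank hy
    _ ≤ f.natDegree := natDegree_le_natDegree (minpoly.degree_le_of_ne_zero K y hf hfy)

variable {F : Type*} [Field F]

lemma aeval_coe_laurentSeries (f : F[X][X]) (m : F⟦X⟧) :
    aeval (m : F⸨X⸩) f = ((f.eval₂ coeToPowerSeries.ringHom m : F⟦X⟧) : F⸨X⸩) := by
  rw [aeval_def, hom_eval₂]
  rfl

lemma exists_aeval_coe_eq_zero_of_quadratic {m : F⟦X⟧} {P Q : F[X]} (hQ : Q ≠ 0)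
    (hquad : (P : F⟦X⟧) *
        (1 - (PowerSeries.X + PowerSeries.X ^ 2) * m + PowerSeries.X ^ 3 * m ^ 2)
      = (1 - PowerSeries.X ^ 2) * (Q : F⟦X⟧) * m) :
    ∃ f : (RatFunc F)[X], f ≠ 0 ∧ f.natDegree ≤ 2 ∧ aeval (m : F⸨X⸩) f = 0 := by
  set f : F[X][X] := C (X ^ 3 * P) * X ^ 2 - C ((X + X ^ 2) * P + (1 - X ^ 2) * Q) * X + C P
  have hf : f ≠ 0 := by
    intro h0
    have hc : ∀ k, f.coeff k = 0 := fun k ↦ by rw [h0, coeff_zero]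
    have hP : P = 0 := by simpa [f, coeff_C_mul_X_pow, coeff_C_mul_X, coeff_C] using hc 0
    have hQ' : (1 - X ^ 2) * Q = 0 := by
      simpa only [f, coeff_add, coeff_sub, coeff_C_mul_X_pow, coeff_C_mul_X, coeff_C, hP,
        mul_zero, zero_add, ite_true, Nat.one_ne_zero, OfNat.one_ne_ofNat, ite_false, zero_sub,
        add_zero, neg_eq_zero] using hc 1
    have hX : (1 - X ^ 2 : F[X]) ≠ 0 := fun h ↦ by simpa using congrArg (eval 0) h
    exact hQ ((mul_eq_zero.mp hQ').resolve_left hX)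
  have hfm : f.eval₂ coeToPowerSeries.ringHom m = 0 := by
    simp only [f, eval₂_add, eval₂_sub, eval₂_mul, eval₂_C, eval₂_X, eval₂_X_pow,
      coeToPowerSeries.ringHom_apply, Polynomial.coe_mul, Polynomial.coe_add, Polynomial.coe_sub,
      Polynomial.coe_pow, Polynomial.coe_X, Polynomial.coe_one]
    linear_combination hquad
  refine ⟨f.map (algebraMap F[X] (RatFunc F)), ?_, ?_, ?_⟩
  · exact (Polynomial.map_ne_zero_iff (IsFractionRing.injective _ _)).mpr hf
  · exact natDegree_map_le.trans (by unfold f; compute_degree)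
  · rw [aeval_map_algebraMap, aeval_coe_laurentSeries, hfm, map_zero]

theorem succ_le_two_of_quadratic {n : ℕ} (hn : 1 ≤ n)
    (hirr : Irreducible (X ^ (n + 1) - X + 1 : F[X])) {m : F⟦X⟧} {P Q : F[X]} (hQ : Q ≠ 0)
    (hquad : (P : F⟦X⟧) *
        (1 - (PowerSeries.X + PowerSeries.X ^ 2) * m + PowerSeries.X ^ 3 * m ^ 2)
      = (1 - PowerSeries.X ^ 2) * (Q : F⟦X⟧) * m)
    (hrec : (1 - PowerSeries.X ^ 3 * m) ^ (n + 1) + PowerSeries.X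
      = (1 + PowerSeries.X - PowerSeries.X ^ 3) * (1 - PowerSeries.X ^ 3 * m) ^ n) :
    n + 1 ≤ 2 := by
  obtain ⟨f, hf, hfdeg, hfm⟩ := exists_aeval_coe_eq_zero_of_quadratic hQ hquad
  set t := algebraMap (RatFunc F) F⸨X⸩ RatFunc.X
  set a : F⸨X⸩ := ((1 - PowerSeries.X ^ 3 * m : F⟦X⟧) : F⸨X⸩)
  have ht : ((PowerSeries.X : F⟦X⟧) : F⸨X⸩) = t := by simp [t]
  have ha : a ≠ 0 := by
    refine (map_ne_zero_iff _ HahnSeries.ofPowerSeries_injective).mpr fun h ↦ ?_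
    simpa using congrArg PowerSeries.constantCoeff h
  have hmem : t / a ∈ IntermediateField.adjoin (RatFunc F) {(m : F⸨X⸩)} := by
    have hta : a = 1 - t ^ 3 * m := by simp [a, ← ht]
    have htm := IntermediateField.algebraMap_mem
      (IntermediateField.adjoin (RatFunc F) {(m : F⸨X⸩)}) RatFunc.X
    have hm := IntermediateField.mem_adjoin_simple_self (RatFunc F) (m : F⸨X⸩)
    rw [hta]
    exact div_mem htm (sub_mem (one_mem _) (mul_mem (pow_mem htm 3) hm))
  have hmin : deformedTrinomial RatFunc.X n = minpoly (RatFunc F) (t / a) :=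
    minpoly.eq_of_irreducible_of_monic (irreducible_deformedTrinomial_X hn hirr)
      (aeval_div_deformedTrinomial _ hn ha
        (by simpa [a, ← ht] using congrArg ((↑) : F⟦X⟧ → F⸨X⸩) hrec))
      (monic_deformedTrinomial _ hn)
  calc n + 1 = (minpoly (RatFunc F) (t / a)).natDegree := by
        rw [← hmin, natDegree_deformedTrinomial _ hn]
    _ ≤ f.natDegree := natDegree_minpoly_le_of_mem_adjoin hf hfm hmem
    _ ≤ 2 := hfdeg

end LaurentSeries

open PowerSeries

/-- Theorem 4.3: for `p ≥ 3` (granting the irreducibility of `t^p − t + 1`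
over `ℚ`), the growth series `S` of positive elements of `F(p)` is
irrational: `S` is not a ratio of two polynomials. -/
theorem stmt12 (p : ℕ) (hp : 3 ≤ p)
    (hirr : Irreducible (Polynomial.X ^ p - Polynomial.X + 1 : Polynomial ℚ))
    (M : ℕ → PowerSeries ℚ) (L R S : PowerSeries ℚ)
    (hM : ∀ i, 1 ≤ i → i ≤ p - 1 →
      M i - 1 = X * (∏ j ∈ Finset.Icc i (p - 1), M j) +
        X ^ 3 * (∏ j ∈ Finset.Icc i (p - 1), M j) *
          ((∏ j ∈ Finset.Icc 1 i, M j) - 1))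
    (hL : L - 1 = X * L * ∏ j ∈ Finset.Icc 1 (p - 1), M j)
    (hR : R = M (p - 1) +
      X ^ 2 * ((∏ j ∈ Finset.Icc 1 (p - 1), M j) * R - M (p - 1)))
    (hS : S = L * (∏ j ∈ Finset.Icc 1 (p - 2), M j) * R) :
    ¬ ∃ (P Q : Polynomial ℚ), Q ≠ 0 ∧
        S * (Q : PowerSeries ℚ) = (P : PowerSeries ℚ) := by
  rintro ⟨P, Q, hQ, hPQ⟩
  have hrec := pow_succ_add_eq_of_prod_recursion hM
  have hm : ∏ j ∈ Finset.Icc 1 (p - 1), M j =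
      (∏ j ∈ Finset.Icc 1 (p - 2), M j) * M (p - 1) := by
    rw [show p - 1 = p - 2 + 1 by omega, Finset.prod_Icc_succ_top (by omega)]
  set m := ∏ j ∈ Finset.Icc 1 (p - 1), M j
  set v := ∏ j ∈ Finset.Icc 1 (p - 2), M j
  have hSm : S * ((1 - X * m) * (1 - X ^ 2 * m)) = (1 - X ^ 2) * m := by
    linear_combination (1 - X * m) * (1 - X ^ 2 * m) * hS + v * R * (1 - X ^ 2 * m) * hL
      + v * hR - (1 - X ^ 2) * hm
  have hquad : (P : ℚ⟦X⟧) * (1 - (X + X ^ 2) * m + X ^ 3 * m ^ 2) =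
      (1 - X ^ 2) * (Q : ℚ⟦X⟧) * m := by
    linear_combination -(1 - X * m) * (1 - X ^ 2 * m) * hPQ + (Q : ℚ⟦X⟧) * hSm
  have := succ_le_two_of_quadratic (n := p - 1) (by omega)
    (by rwa [Nat.sub_add_cancel (by omega)]) hQ hquad hrec
  omega
end

section
/- Let p ≥ 2 be an integer and let x be a real number with 0 < x ≤ 1/p satisfying (1 − x²)^{p−1}·(1 + x − x²) = 1. Then p + 1/2 − 4/(3p) < 1/x < p + 1/2. -/
/-!
Writing `u = (1 - x²)⁻¹`, the equation says exactly that `1 / x = 1 + u + ⋯ + u ^ (p - 1)`.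
Bernoulli's inequality squeezes `u ^ j` between `1 + j x²` and `(1 - j x²)⁻¹`, so
`1 / x = p + p (p - 1) / 2 · x² · (1 + O(1 / p))`. With `x ≤ 1 / p` this is below `p + 1 / 2`,
and feeding the resulting `x > 1 / (p + 1 / 2)` back into the lower estimate gives the other bound.
-/

open Finset

theorem one_div_eq_sum_range_inv_pow_of_root {K : Type*} [Field K] {x : K} (hx : x ≠ 0)
    (hx1 : 1 - x ^ 2 ≠ 0) {n : ℕ} (h : (1 - x ^ 2) ^ n * (1 + x - x ^ 2) = 1) :
    1 / x = ∑ j ∈ range (n + 1), ((1 - x ^ 2)⁻¹) ^ j := by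
  have hinv : (1 - x ^ 2)⁻¹ ≠ 1 := by
    rw [inv_ne_one, Ne, sub_eq_self]
    exact pow_ne_zero 2 hx
  rw [geom_sum_eq hinv, inv_pow, pow_succ]
  field_simp
  linear_combination x * h

section OrderedField

variable {R : Type*} [Field R] [LinearOrder R] [IsStrictOrderedRing R]

theorem sum_range_one_add_mul (a : R) (n : ℕ) :
    ∑ j ∈ range n, (1 + j * a) = n + n * (n - 1) / 2 * a := by
  induction n with
  | zero => simp
  | succ n ih => rw [sum_range_succ, ih]; push_cast; ring

theorem one_add_mul_le_inv_one_sub_pow {t : R} (ht0 : 0 ≤ t) (ht1 : t < 1) (j : ℕ) :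
    1 + j * t ≤ ((1 - t)⁻¹) ^ j := by
  have hpos : 0 < 1 - t := sub_pos.mpr ht1
  have hle : t ≤ (1 - t)⁻¹ - 1 := by
    rw [inv_eq_one_div, le_sub_iff_add_le, le_div_iff₀ hpos]
    nlinarith
  calc 1 + j * t ≤ 1 + j * ((1 - t)⁻¹ - 1) := by gcongr
    _ ≤ ((1 - t)⁻¹) ^ j := one_add_mul_sub_le_pow (by linarith [inv_pos.mpr hpos]) j

theorem inv_one_sub_pow_le_inv_one_sub_mul {t : R} (ht0 : 0 ≤ t) {j : ℕ} (hj : j * t < 1) :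
    ((1 - t)⁻¹) ^ j ≤ (1 - j * t)⁻¹ := by
  rcases j.eq_zero_or_pos with rfl | hj0
  · simp
  have ht1 : t < 1 := by
    have : t ≤ j * t := le_mul_of_one_le_left ht0 (by exact_mod_cast hj0)
    linarith
  rw [inv_pow]
  refine inv_anti₀ (sub_pos.mpr hj) ?_
  simpa [← sub_eq_add_neg] using one_add_mul_le_pow (a := -t) (by linarith) j

theorem inv_one_sub_le_one_add_div {s c : R} (hs0 : 0 ≤ s) (hsc : s ≤ c) (hc : c < 1) :
    (1 - s)⁻¹ ≤ 1 + s / (1 - c) := by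
  have hs1 : 0 < 1 - s := by linarith
  calc (1 - s)⁻¹ = 1 + s / (1 - s) := by field_simp; ring
    _ ≤ 1 + s / (1 - c) := by gcongr

theorem add_mul_le_sum_range_inv_one_sub_pow {t : R} (ht0 : 0 ≤ t) (ht1 : t < 1) (n : ℕ) :
    n + n * (n - 1) / 2 * t ≤ ∑ j ∈ range n, ((1 - t)⁻¹) ^ j := by
  rw [← sum_range_one_add_mul]
  exact sum_le_sum fun j _ ↦ one_add_mul_le_inv_one_sub_pow ht0 ht1 j

theorem sum_range_inv_one_sub_pow_le {t c : R} {n : ℕ} (ht0 : 0 ≤ t) (htc : t ≤ c)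
    (hc : (n - 1) * c < 1) :
    ∑ j ∈ range n, ((1 - t)⁻¹) ^ j ≤ n + n * (n - 1) / 2 * (t / (1 - (n - 1) * c)) := by
  rw [← sum_range_one_add_mul]
  refine sum_le_sum fun j hj ↦ ?_
  have hjn : (j : R) ≤ n - 1 := by
    rw [le_sub_iff_add_le]; exact_mod_cast mem_range.mp hj
  have hjt : j * t ≤ (n - 1) * c :=
    mul_le_mul hjn htc ht0 ((Nat.cast_nonneg j).trans hjn)
  calc ((1 - t)⁻¹) ^ j ≤ (1 - j * t)⁻¹ := inv_one_sub_pow_le_inv_one_sub_mul ht0 (hjt.trans_lt hc)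
    _ ≤ 1 + j * t / (1 - (n - 1) * c) := inv_one_sub_le_one_add_div (by positivity) hjt hc
    _ = 1 + j * (t / (1 - (n - 1) * c)) := by rw [mul_div_assoc]

theorem sum_range_inv_one_sub_pow_lt_add_half {t : R} {n : ℕ} (hn : n ≠ 0) (ht0 : 0 ≤ t)
    (ht : t ≤ 1 / (n : R) ^ 2) :
    ∑ j ∈ range n, ((1 - t)⁻¹) ^ j < n + 1 / 2 := by
  have hn1 : (1 : R) ≤ n := by exact_mod_cast Nat.one_le_iff_ne_zero.mpr hn
  have hd : (0 : R) < n ^ 2 - (n - 1) := by nlinarith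
  have hc : ((n : R) - 1) * (1 / (n : R) ^ 2) < 1 := by
    rw [← div_eq_mul_one_div, div_lt_one (by positivity)]; nlinarith
  have hval : (n : R) * (n - 1) / 2 * ((1 / (n : R) ^ 2) / (1 - (n - 1) * (1 / (n : R) ^ 2)))
      = n * (n - 1) / (2 * (n ^ 2 - (n - 1))) := by
    field_simp [hd.ne']
  calc ∑ j ∈ range n, ((1 - t)⁻¹) ^ j
      ≤ n + n * (n - 1) / 2 * (t / (1 - (n - 1) * (1 / (n : R) ^ 2))) :=
        sum_range_inv_one_sub_pow_le ht0 ht hc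
    _ ≤ n + n * (n - 1) / 2 * ((1 / (n : R) ^ 2) / (1 - (n - 1) * (1 / (n : R) ^ 2))) := by
        gcongr
    _ < n + 1 / 2 := by
        rw [hval, add_lt_add_iff_left, div_lt_iff₀ (by linarith)]
        linarith

theorem add_half_sub_lt_sum_range_inv_one_sub_pow {t : R} {n : ℕ} (hn : n ≠ 0)
    (ht : 1 / ((n : R) + 1 / 2) ^ 2 < t) (ht1 : t < 1) :
    n + 1 / 2 - 4 / (3 * n) < ∑ j ∈ range n, ((1 - t)⁻¹) ^ j := by
  have hn1 : (1 : R) ≤ n := by exact_mod_cast Nat.one_le_iff_ne_zero.mpr hn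
  have ht0 : 0 ≤ t := le_of_lt ((one_div_pos.mpr (by positivity)).trans ht)
  calc (n : R) + 1 / 2 - 4 / (3 * n) < n + n * (n - 1) / 2 * (1 / ((n : R) + 1 / 2) ^ 2) := by
        field_simp
        nlinarith
    _ ≤ n + n * (n - 1) / 2 * t := by gcongr
    _ ≤ ∑ j ∈ range n, ((1 - t)⁻¹) ^ j := add_mul_le_sum_range_inv_one_sub_pow ht0 ht1 n

end OrderedField

/-- Bounds on the reciprocal of the positive root `x ∈ (0, 1/p]` of
`(1 − x²)^{p−1}(1 + x − x²) = 1`: one has `p + 1/2 − 4/(3p) < 1/x < p + 1/2`. -/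
theorem stmt14 (p : ℕ) (hp : 2 ≤ p) (x : ℝ) (hx0 : 0 < x)
    (hx1 : x ≤ 1 / (p : ℝ))
    (heq : (1 - x ^ 2) ^ (p - 1) * (1 + x - x ^ 2) = 1) :
    (p : ℝ) + 1 / 2 - 4 / (3 * (p : ℝ)) < 1 / x ∧ 1 / x < (p : ℝ) + 1 / 2 := by
  have hp0 : p ≠ 0 := by omega
  have hxp : x ^ 2 ≤ 1 / (p : ℝ) ^ 2 := by
    rw [← one_div_pow]; exact pow_le_pow_left₀ hx0.le hx1 2
  have hx2 : x ^ 2 < 1 := by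
    have hp2 : (2 : ℝ) ≤ p := by exact_mod_cast hp
    have : (4 : ℝ) ≤ (p : ℝ) ^ 2 := by nlinarith
    exact hxp.trans_lt (by rw [div_lt_one (by positivity)]; linarith)
  have hsum : 1 / x = ∑ j ∈ range p, ((1 - x ^ 2)⁻¹) ^ j := by
    rw [one_div_eq_sum_range_inv_pow_of_root hx0.ne' (sub_pos.mpr hx2).ne' heq, Nat.sub_add_cancel (by omega)]
  have hupper : 1 / x < p + 1 / 2 :=
    hsum ▸ sum_range_inv_one_sub_pow_lt_add_half hp0 (sq_nonneg x) hxp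
  have hxlower : 1 / ((p : ℝ) + 1 / 2) ^ 2 < x ^ 2 := by
    rw [← one_div_pow]
    gcongr
    rwa [div_lt_iff₀ (by positivity), ← div_lt_iff₀' hx0]
  exact ⟨hsum ▸ add_half_sub_lt_sum_range_inv_one_sub_pow hp0 hxlower hx2, hupper⟩
end

section
/- The canonical monoid homomorphism from the free monoid on p generators to the generalized Thompson group F(p), sending the i-th free generator to x_i for 0 ≤ i ≤ p−1, is injective. In other words, x_0, x_1, …, x_{p-1} generate a free submonoid of rank p in F(p): two positive words in x_0, …, x_{p-1} are equal in F(p) only if they are identical words. -/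
namespace ThompsonAction

section PiecewiseLinear

variable {q : ℚ}

def plGen (q a t : ℚ) : ℚ :=
  if t ≤ a then t else if t ≤ a + q then a + (t - a) / q else t - (q - 1)

def plGenInv (q a t : ℚ) : ℚ :=
  if t ≤ a then t else if t ≤ a + 1 then a + q * (t - a) else t + (q - 1)

lemma plGen_of_le {a t : ℚ} (h : t ≤ a) : plGen q a t = t := if_pos h

lemma plGen_of_mem_Icc {a t : ℚ} (h₁ : a ≤ t) (h₂ : t ≤ a + q) :
    plGen q a t = a + (t - a) / q := by
  unfold plGen
  split_ifs with h
  · simp [le_antisymm h h₁]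
  · rfl

lemma plGen_of_ge (hq : 0 < q) {a t : ℚ} (h : a + q ≤ t) : plGen q a t = t - (q - 1) := by
  unfold plGen
  split_ifs with h₁ h₂
  · linarith
  · rw [le_antisymm h₂ h]
    field_simp
    ring
  · rfl

lemma plGenInv_plGen (hq : 0 < q) (a t : ℚ) : plGenInv q a (plGen q a t) = t := by
  rcases le_or_gt t a with h | h
  · rw [plGen_of_le h, plGenInv, if_pos h]
  rcases le_or_gt t (a + q) with h' | h'
  · rw [plGen_of_mem_Icc h.le h']
    have : (t - a) / q ≤ 1 := by rw [div_le_one hq]; linarith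
    rw [plGenInv, if_neg (by linarith [div_pos (sub_pos.2 h) hq]), if_pos (by linarith)]
    field_simp
    ring
  · rw [plGen_of_ge hq h'.le, plGenInv, if_neg (by linarith), if_neg (by linarith)]
    ring

lemma plGen_plGenInv (hq : 0 < q) (a t : ℚ) : plGen q a (plGenInv q a t) = t := by
  rcases le_or_gt t a with h | h
  · rw [plGenInv, if_pos h, plGen_of_le h]
  rcases le_or_gt t (a + 1) with h' | h'
  · rw [plGenInv, if_neg h.not_ge, if_pos h', plGen_of_mem_Icc (by nlinarith) (by nlinarith)]
    field_simp
    ring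
  · rw [plGenInv, if_neg h.not_ge, if_neg h'.not_ge, plGen_of_ge hq (by linarith)]
    ring

def plPerm (hq : 0 < q) (a : ℚ) : Equiv.Perm ℚ :=
  ⟨plGen q a, plGenInv q a, plGenInv_plGen hq a, plGen_plGenInv hq a⟩

lemma plGen_plGen_of_add_one_le (hq : 0 < q) {a b : ℚ} (hab : a + 1 ≤ b) (t : ℚ) :
    plGen q b (plGen q a t) = plGen q a (plGen q (b + q - 1) t) := by
  set c := b + q - 1
  rcases le_or_gt t a with h₁ | h₁
  · rw [plGen_of_le h₁, plGen_of_le (show t ≤ b by linarith), plGen_of_le (show t ≤ c by linarith),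
      plGen_of_le h₁]
  rcases le_or_gt t (a + q) with h₂ | h₂
  · have : (t - a) / q ≤ 1 := by rw [div_le_one hq]; linarith
    rw [plGen_of_mem_Icc h₁.le h₂, plGen_of_le (show _ ≤ b by linarith),
      plGen_of_le (show t ≤ c by linarith), plGen_of_mem_Icc h₁.le h₂]
  rw [plGen_of_ge hq h₂.le]
  rcases le_or_gt t c with h₃ | h₃
  · rw [plGen_of_le (show _ ≤ b by linarith), plGen_of_le h₃, plGen_of_ge hq h₂.le]
  rcases le_or_gt t (c + q) with h₄ | h₄
  · have : 0 ≤ (t - c) / q := div_nonneg (by linarith) hq.le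
    rw [plGen_of_mem_Icc (by linarith) (by linarith), plGen_of_mem_Icc h₃.le h₄,
      plGen_of_ge hq (by linarith)]
    ring
  · rw [plGen_of_ge hq (by linarith), plGen_of_ge hq h₄.le, plGen_of_ge hq (by linarith)]

lemma sub_le_plGen (hq : 1 ≤ q) (a s : ℚ) : s - (q - 1) ≤ plGen q a s := by
  rcases le_or_gt s a with h | h
  · rw [plGen_of_le h]; linarith
  rcases le_or_gt s (a + q) with h' | h'
  · rw [plGen_of_mem_Icc h.le h']
    have : (s - a) / q * q = s - a := div_mul_cancel₀ _ (by positivity)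
    have : (s - a) / q ≤ 1 := by rw [div_le_one (by linarith)]; linarith
    nlinarith
  · rw [plGen_of_ge (by linarith) h'.le]

lemma sub_lt_plGen (hq : 1 < q) {a s : ℚ} (h : s < a + q) : s - (q - 1) < plGen q a s := by
  rcases le_or_gt s a with h₁ | h₁
  · rw [plGen_of_le h₁]; linarith
  rw [plGen_of_mem_Icc h₁.le h.le]
  have : (s - a) / q * q = s - a := div_mul_cancel₀ _ (by positivity)
  have : (s - a) / q < 1 := by rw [div_lt_one (by linarith)]; linarith
  nlinarith

end PiecewiseLinear

section Words

variable {p : ℕ}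

def wordMap (p : ℕ) : List (Fin p) → ℚ → ℚ
  | [], t => t
  | a :: l, t => plGen p (a : ℕ) (wordMap p l t)

def threshold (p : ℕ) : List (Fin p) → ℚ
  | [] => 0
  | a :: l => (a : ℕ) + p + l.length * (p - 1)

lemma threshold_le (l : List (Fin p)) : threshold p l ≤ p + l.length * (p - 1) := by
  cases l with
  | nil => simp [threshold]
  | cons a l =>
    have : ((a : ℕ) : ℚ) + 1 ≤ p := by exact_mod_cast a.isLt
    simp only [threshold, List.length_cons]
    push_cast
    linarith

lemma wordMap_of_threshold_le (hp : 0 < p) {l : List (Fin p)} {t : ℚ} (h : threshold p l ≤ t) :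
    wordMap p l t = t - l.length * (p - 1) := by
  induction l with
  | nil => simp [wordMap]
  | cons a l ih =>
    have ha : (0 : ℚ) ≤ (a : ℕ) := Nat.cast_nonneg _
    simp only [threshold] at h
    rw [wordMap, ih (by linarith [threshold_le l]), plGen_of_ge (by exact_mod_cast hp)
      (by linarith), List.length_cons]
    push_cast
    ring

lemma sub_le_wordMap (hp : 1 ≤ p) (l : List (Fin p)) (t : ℚ) :
    t - l.length * (p - 1) ≤ wordMap p l t := by
  induction l with
  | nil => simp [wordMap]
  | cons a l ih =>
    have := sub_le_plGen (q := p) (by exact_mod_cast hp) (a : ℕ) (wordMap p l t)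
    rw [wordMap, List.length_cons]
    push_cast
    linarith

lemma sub_lt_wordMap_cons (hp : 2 ≤ p) {a : Fin p} {l : List (Fin p)} {t : ℚ}
    (h : t < threshold p (a :: l)) :
    t - (l.length + 1) * (p - 1) < wordMap p (a :: l) t := by
  have hp' : (1 : ℚ) < p := by exact_mod_cast hp
  have hl := sub_le_wordMap (by omega) l t
  simp only [threshold] at h
  rw [wordMap]
  rcases lt_or_ge (wordMap p l t) ((a : ℕ) + p) with hs | hs
  · linarith [sub_lt_plGen hp' hs]
  · rw [plGen_of_ge (by linarith) hs]
    linarith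

lemma wordMap_cons_eq_sub_iff (hp : 2 ≤ p) (a : Fin p) (l : List (Fin p)) (t : ℚ) :
    wordMap p (a :: l) t = t - (l.length + 1) * (p - 1) ↔ threshold p (a :: l) ≤ t := by
  refine ⟨fun h => not_lt.1 fun ht => (sub_lt_wordMap_cons hp ht).ne' h, fun h => ?_⟩
  rw [wordMap_of_threshold_le (by omega) h, List.length_cons]
  push_cast
  ring

lemma length_eq_of_wordMap_eq (hp : 2 ≤ p) {l₁ l₂ : List (Fin p)}
    (h : wordMap p l₁ = wordMap p l₂) : l₁.length = l₂.length := by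
  have hp' : (1 : ℚ) < p := by exact_mod_cast hp
  set t := max (threshold p l₁) (threshold p l₂)
  have e := congrFun h t
  rw [wordMap_of_threshold_le (by omega) (le_max_left _ _),
    wordMap_of_threshold_le (by omega) (le_max_right _ _)] at e
  have : (l₁.length : ℚ) = l₂.length :=
    mul_right_cancel₀ (sub_ne_zero.2 hp'.ne') (by linarith)
  exact_mod_cast this

lemma wordMap_injective (hp : 2 ≤ p) : Function.Injective (wordMap p) := by
  intro l₁
  induction l₁ with
  | nil =>
    intro l₂ h
    exact (List.length_eq_zero_iff.1 (length_eq_of_wordMap_eq hp h).symm).symm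
  | cons a l₁ ih =>
    rintro (_ | ⟨b, l₂⟩) h
    · exact absurd (length_eq_of_wordMap_eq hp h) (by simp)
    have hlen : l₁.length = l₂.length := by simpa using length_eq_of_wordMap_eq hp h
    have hray (t : ℚ) : threshold p (a :: l₁) ≤ t ↔ threshold p (b :: l₂) ≤ t := by
      rw [← wordMap_cons_eq_sub_iff hp, ← wordMap_cons_eq_sub_iff hp, h, hlen]
    have hthr := le_antisymm ((hray _).2 le_rfl) ((hray _).1 le_rfl)
    obtain rfl : a = b := by
      simp only [threshold, hlen, add_left_inj] at hthr
      exact Fin.ext (by exact_mod_cast hthr)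
    have hq : (0 : ℚ) < p := by exact_mod_cast (show 0 < p by omega)
    rw [ih (funext fun t => (plPerm hq _).injective (congrFun h t))]

end Words

noncomputable def plAction {p : ℕ} (hp : 0 < p) : FP p →* Equiv.Perm ℚ :=
  PresentedGroup.toGroup (f := fun n : ℕ => plPerm (Nat.cast_pos.2 hp) n) <| by
    rintro _ ⟨i, j, hij, rfl⟩
    have hcast : ((j + p - 1 : ℕ) : ℚ) = j + p - 1 := by
      rw [Nat.cast_sub (by omega)]
      push_cast
      ring
    have hrel : plPerm (Nat.cast_pos.2 hp) j * plPerm (Nat.cast_pos.2 hp) i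
        = plPerm (Nat.cast_pos.2 hp) i * plPerm (Nat.cast_pos.2 hp) (j + p - 1 : ℕ) := by
      ext t
      simp only [Equiv.Perm.mul_apply, plPerm, Equiv.coe_fn_mk, hcast]
      exact plGen_plGen_of_add_one_le (Nat.cast_pos.2 hp) (by exact_mod_cast hij) t
    simp only [map_mul, map_inv, FreeGroup.lift_apply_of, hrel]
    group

lemma plAction_lift_ofList {p : ℕ} (hp : 0 < p) (l : List (Fin p)) (t : ℚ) :
    plAction hp (FreeMonoid.lift (fun i : Fin p => xgen p i) (FreeMonoid.ofList l)) t
      = wordMap p l t := by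
  induction l with
  | nil => rfl
  | cons a l ih =>
    rw [FreeMonoid.ofList_cons, map_mul, map_mul, Equiv.Perm.mul_apply, ih,
      FreeMonoid.lift_eval_of, xgen, plAction, PresentedGroup.toGroup.of]
    rfl

end ThompsonAction

open ThompsonAction in
/-- `x_0, x_1, …, x_{p−1}` generate a free submonoid of rank `p` in `F(p)`:
the canonical monoid homomorphism from the free monoid on `p` generators to
`F(p)` sending the `i`-th generator to `x_i` is injective. -/
theorem stmt15 (p : ℕ) (hp : 2 ≤ p) :
    Function.Injective
      (FreeMonoid.lift (fun i : Fin p => xgen p (i : ℕ)) :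
        FreeMonoid (Fin p) →* FP p) := by
  intro w v h
  apply FreeMonoid.toList.injective
  apply wordMap_injective hp
  funext t
  rw [← plAction_lift_ofList (by omega), ← plAction_lift_ofList (by omega),
    FreeMonoid.ofList_toList, FreeMonoid.ofList_toList, h]
end

section
/- For each integer p ≥ 2 there is a unique real number ξ_p > 1 satisfying (2ξ_p − 1)·(ξ_p − 1)^{p−1} = ξ_p^{p}, and as p → ∞ one has ξ_p = (p − 1/2)/ln 2 + 1/2 + o(1); that is, ξ_p − ((p − 1/2)/ln 2 + 1/2) tends to 0 as p tends to infinity. -/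
/-!
Dividing by `ξ ^ p` and taking logarithms, `ξ > 1` is a root exactly when
`Φ_p(ξ) = log (2 - 1/ξ) + (p - 1) log (1 - 1/ξ)` vanishes. On `(1, ∞)` the function `Φ_p` is
strictly increasing, negative at `2` and tends to `log 2` at infinity, whence existence and
uniqueness. For the asymptotics put `c_p = (p - 1/2) / log 2 + 1/2` and `x = c_p + δ`. Expanding
`log (2 - 1/x) = log 2 + log (1 - 1/(2x))` to first order and `log (1 - 1/x)` to second order in
`1/x`, the `log 2` cancels against the leading term of `(p - 1) log (1 - 1/x)` and one finds
`x Φ_p(x) → δ log 2`. So `Φ_p(c_p ± δ)` eventually has the sign of `±δ`, which pins the root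
between `c_p - δ` and `c_p + δ`.
-/

open Real Filter Set Topology

noncomputable def logDefect (p x : ℝ) : ℝ :=
  log (2 - x⁻¹) + (p - 1) * log (1 - x⁻¹)

lemma logDefect_eq_log_sub_log {p : ℕ} (hp : 1 ≤ p) {x : ℝ} (hx : 1 < x) :
    logDefect p x = log ((2 * x - 1) * (x - 1) ^ (p - 1)) - log (x ^ p) := by
  have hx0 : x ≠ 0 := by positivity
  have hx1 : 0 < x - 1 := by linarith
  rw [logDefect, log_mul (by linarith) (pow_pos hx1 _).ne', log_pow, log_pow, Nat.cast_sub hp,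
    show 2 - x⁻¹ = (2 * x - 1) / x by field_simp, show 1 - x⁻¹ = (x - 1) / x by field_simp,
    log_div (by linarith) hx0, log_div (by linarith) hx0]
  push_cast
  ring

lemma logDefect_eq_zero_iff {p : ℕ} (hp : 1 ≤ p) {x : ℝ} (hx : 1 < x) :
    logDefect p x = 0 ↔ (2 * x - 1) * (x - 1) ^ (p - 1) = x ^ p := by
  have hlhs : 0 < (2 * x - 1) * (x - 1) ^ (p - 1) :=
    mul_pos (by linarith) (pow_pos (by linarith) _)
  rw [logDefect_eq_log_sub_log hp hx, sub_eq_zero]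
  exact ⟨fun h => log_injOn_pos hlhs (pow_pos (by linarith : (0 : ℝ) < x) _) h, congrArg log⟩

lemma strictMonoOn_logDefect {p : ℝ} (hp : 1 ≤ p) : StrictMonoOn (logDefect p) (Ioi 1) := by
  intro a ha b hb hab
  simp only [mem_Ioi] at ha hb
  have hinv : b⁻¹ < a⁻¹ := inv_strictAnti₀ (by linarith) hab
  have ha1 : a⁻¹ < 1 := inv_lt_one_of_one_lt₀ ha
  have h2 : log (2 - a⁻¹) < log (2 - b⁻¹) := log_lt_log (by linarith) (by linarith)
  have h1 : log (1 - a⁻¹) ≤ log (1 - b⁻¹) := log_le_log (by linarith) (by linarith)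
  unfold logDefect
  nlinarith [mul_le_mul_of_nonneg_left h1 (sub_nonneg.2 hp)]

lemma continuousOn_logDefect (p : ℝ) : ContinuousOn (logDefect p) (Ioi 1) := by
  intro x hx
  have hx0 : x ≠ 0 := by simp only [mem_Ioi] at hx; positivity
  have hx1 : x⁻¹ < 1 := inv_lt_one_of_one_lt₀ hx
  apply ContinuousAt.continuousWithinAt
  unfold logDefect
  fun_prop (disch := first | exact hx0 | linarith)

lemma logDefect_two_neg {p : ℝ} (hp : 2 ≤ p) : logDefect p 2 < 0 := by
  have hhalf : log (1 - 2⁻¹) < 0 := log_neg (by norm_num) (by norm_num)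
  have h34 : log (2 - 2⁻¹) + log (1 - 2⁻¹) < 0 := by
    rw [← log_mul (by norm_num) (by norm_num)]; exact log_neg (by norm_num) (by norm_num)
  unfold logDefect
  nlinarith

lemma tendsto_logDefect_atTop (p : ℝ) : Tendsto (logDefect p) atTop (𝓝 (log 2)) := by
  have h : Tendsto (logDefect p) atTop
      (𝓝 (log (2 - 0) + (p - 1) * log (1 - 0))) :=
    ((tendsto_const_nhds.sub tendsto_inv_atTop_zero).log (by norm_num)).add
      (tendsto_const_nhds.mul ((tendsto_const_nhds.sub tendsto_inv_atTop_zero).log (by norm_num)))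
  convert h using 2
  simp

lemma existsUnique_root (p : ℕ) (hp : 2 ≤ p) :
    ∃! ξ : ℝ, 1 < ξ ∧ (2 * ξ - 1) * (ξ - 1) ^ (p - 1) = ξ ^ p := by
  have hp' : (2 : ℝ) ≤ p := by exact_mod_cast hp
  obtain ⟨b, hb_pos, hb⟩ := (((tendsto_logDefect_atTop p).eventually
    (lt_mem_nhds (log_pos one_lt_two))).and (eventually_gt_atTop 1)).exists
  obtain ⟨ξ, hξ, hξ0⟩ := isPreconnected_Ioi.intermediate_value (by norm_num : (2 : ℝ) ∈ Ioi 1)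
    (mem_Ioi.2 hb) (continuousOn_logDefect p) ⟨(logDefect_two_neg hp').le, hb_pos.le⟩
  have hp1 : 1 ≤ p := by omega
  refine ⟨ξ, ⟨hξ, (logDefect_eq_zero_iff hp1 hξ).1 hξ0⟩, fun η ⟨hη, hη0⟩ => ?_⟩
  exact (strictMonoOn_logDefect (by linarith)).injOn hη hξ
    (((logDefect_eq_zero_iff hp1 hη).2 hη0).trans hξ0.symm)

lemma lt_root_of_logDefect_neg {p : ℝ} (hp : 1 ≤ p) {ξ y : ℝ} (hξ : 1 < ξ) (hξ0 : logDefect p ξ = 0)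
    (hy : logDefect p y < 0) : y < ξ := by
  rcases le_or_gt y 1 with hy1 | hy1
  · linarith
  · exact (strictMonoOn_logDefect hp).lt_iff_lt hy1 hξ |>.1 (hξ0 ▸ hy)

lemma root_lt_of_logDefect_pos {p : ℝ} (hp : 1 ≤ p) {ξ y : ℝ} (hξ : 1 < ξ) (hξ0 : logDefect p ξ = 0)
    (hy1 : 1 < y) (hy : 0 < logDefect p y) : ξ < y :=
  (strictMonoOn_logDefect hp).lt_iff_lt hξ hy1 |>.1 (hξ0 ▸ hy)

lemma tendsto_pow_mul_sum_add_log_one_sub (c : ℝ) (n : ℕ) :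
    Tendsto (fun s : ℝ => s ^ n *
      ((∑ i ∈ Finset.range n, (c / s) ^ (i + 1) / (i + 1)) + log (1 - c / s))) atTop (𝓝 0) := by
  have hbound : Tendsto (fun s : ℝ => |c| ^ (n + 1) / (s - |c|)) atTop (𝓝 0) :=
    tendsto_const_nhds.div_atTop (tendsto_atTop_add_const_right _ _ tendsto_id)
  refine squeeze_zero_norm' ?_ hbound
  filter_upwards [eventually_gt_atTop (|c|)] with s hs
  have hs0 : 0 < s := (abs_nonneg c).trans_lt hs
  have hcs : |c / s| = |c| / s := by rw [abs_div, abs_of_pos hs0]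
  have hlt : |c / s| < 1 := by rw [hcs, div_lt_one hs0]; exact hs
  calc ‖s ^ n * ((∑ i ∈ Finset.range n, (c / s) ^ (i + 1) / (i + 1)) + log (1 - c / s))‖
      ≤ s ^ n * (|c / s| ^ (n + 1) / (1 - |c / s|)) := by
        rw [Real.norm_eq_abs, abs_mul, abs_of_pos (pow_pos hs0 n)]
        exact mul_le_mul_of_nonneg_left (abs_log_sub_add_sum_range_le hlt n) (by positivity)
    _ = |c| ^ (n + 1) / (s - |c|) := by
        rw [hcs, div_pow]
        field_simp
        ring

lemma tendsto_mul_logDefect_sub_div_log_two (a : ℝ) :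
    Tendsto (fun s => s * logDefect (s - a) (s / log 2)) atTop
      (𝓝 (log 2 * (a + 1 / 2 - log 2 / 2))) := by
  generalize hL : log 2 = L
  have hL0 : 0 < L := hL ▸ log_pos one_lt_two
  have hA := tendsto_pow_mul_sum_add_log_one_sub (L / 2) 1
  have hB := tendsto_pow_mul_sum_add_log_one_sub L 2
  have hinv : Tendsto (fun s : ℝ => (a + 1) / s) atTop (𝓝 0) :=
    tendsto_const_nhds.div_atTop tendsto_id
  have hlim := ((hA.sub_const (L / 2)).add (((tendsto_const_nhds (x := (1 : ℝ))).sub hinv).mul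
    (hB.sub_const (L ^ 2 / 2)))).add_const ((a + 1) * L)
  rw [show L * (a + 1 / 2 - L / 2) = 0 - L / 2 + (1 - 0) * (0 - L ^ 2 / 2) + (a + 1) * L by ring]
  refine hlim.congr' ?_
  filter_upwards [eventually_gt_atTop L] with s hs
  have hs0 : s ≠ 0 := (hL0.trans hs).ne'
  have hsmall : L / 2 / s < 1 := by rw [div_div, div_lt_one (by linarith)]; linarith
  have hsplit : log (2 - (s / L)⁻¹) = log 2 + log (1 - L / 2 / s) := by
    rw [← log_mul two_ne_zero (sub_pos.2 hsmall).ne']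
    congr 1
    field_simp
  rw [logDefect, hsplit, hL]
  simp only [Finset.sum_range_succ, Finset.sum_range_zero, inv_div,
    Nat.cast_zero, Nat.cast_one, zero_add, pow_one, one_add_one_eq_two]
  generalize log (1 - L / 2 / s) = u
  generalize log (1 - L / s) = v
  field_simp
  ring

noncomputable def approxRoot (p : ℕ) : ℝ := ((p : ℝ) - 1 / 2) / log 2 + 1 / 2

lemma tendsto_approxRoot_add (δ : ℝ) : Tendsto (fun p => approxRoot p + δ) atTop atTop :=
  tendsto_atTop_add_const_right _ _ <| tendsto_atTop_add_const_right _ _ <|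
    (tendsto_atTop_add_const_right _ _ tendsto_natCast_atTop_atTop).atTop_div_const
      (log_pos one_lt_two)

lemma tendsto_mul_logDefect_approxRoot_add (δ : ℝ) :
    Tendsto (fun p : ℕ => (approxRoot p + δ) * logDefect p (approxRoot p + δ)) atTop
      (𝓝 (δ * log 2)) := by
  have hL : log 2 ≠ 0 := (log_pos one_lt_two).ne'
  set a := (1 / 2 + δ) * log 2 - 1 / 2
  have h := ((tendsto_mul_logDefect_sub_div_log_two a).comp (tendsto_atTop_add_const_right atTop a
    tendsto_natCast_atTop_atTop)).div_const (log 2)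
  convert h using 2 with p
  · have hx : approxRoot p + δ = ((p : ℝ) + a) / log 2 := by
      rw [approxRoot]; field_simp; ring
    simp only [Function.comp, add_sub_cancel_right, hx]
    ring
  · field_simp
    ring

lemma eventually_logDefect_approxRoot_add_neg {δ : ℝ} (hδ : δ < 0) :
    ∀ᶠ p : ℕ in atTop, logDefect p (approxRoot p + δ) < 0 := by
  filter_upwards [(tendsto_mul_logDefect_approxRoot_add δ).eventually
      (gt_mem_nhds (mul_neg_of_neg_of_pos hδ (log_pos one_lt_two))),
    (tendsto_approxRoot_add δ).eventually_gt_atTop 0] with p hneg hx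
  exact neg_of_mul_neg_right hneg hx.le

lemma eventually_one_lt_and_logDefect_approxRoot_add_pos {δ : ℝ} (hδ : 0 < δ) :
    ∀ᶠ p : ℕ in atTop, 1 < approxRoot p + δ ∧ 0 < logDefect p (approxRoot p + δ) := by
  filter_upwards [(tendsto_mul_logDefect_approxRoot_add δ).eventually
      (lt_mem_nhds (mul_pos hδ (log_pos one_lt_two))),
    (tendsto_approxRoot_add δ).eventually_gt_atTop 1] with p hpos hx
  exact ⟨hx, pos_of_mul_pos_right hpos (zero_le_one.trans hx.le)⟩

/-- For each integer `p ≥ 2` there is a unique real `ξ_p > 1` with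
`(2ξ_p − 1)(ξ_p − 1)^{p−1} = ξ_p^p`, and
`ξ_p = (p − 1/2)/ln 2 + 1/2 + o(1)` as `p → ∞`. -/
theorem stmt19 :
    (∀ p : ℕ, 2 ≤ p →
      ∃! ξ : ℝ, 1 < ξ ∧ (2 * ξ - 1) * (ξ - 1) ^ (p - 1) = ξ ^ p) ∧
    ∀ ξ : ℕ → ℝ,
      (∀ p : ℕ, 2 ≤ p →
        1 < ξ p ∧ (2 * ξ p - 1) * (ξ p - 1) ^ (p - 1) = (ξ p) ^ p) →
      Filter.Tendsto
        (fun p : ℕ => ξ p - (((p : ℝ) - 1 / 2) / Real.log 2 + 1 / 2))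
        Filter.atTop (nhds 0) := by
  refine ⟨existsUnique_root, fun ξ hξ => ?_⟩
  have hroot : ∀ p : ℕ, 2 ≤ p → 1 ≤ (p : ℝ) ∧ 1 < ξ p ∧ logDefect p (ξ p) = 0 := fun p hp =>
    ⟨by exact_mod_cast (by omega : 1 ≤ p), (hξ p hp).1,
      (logDefect_eq_zero_iff (by omega) (hξ p hp).1).2 (hξ p hp).2⟩
  refine tendsto_order.2 ⟨fun δ hδ => ?_, fun δ hδ => ?_⟩
  · filter_upwards [eventually_logDefect_approxRoot_add_neg hδ, eventually_ge_atTop 2] with p hneg hp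
    obtain ⟨hp1, hξ1, hξ0⟩ := hroot p hp
    have := lt_root_of_logDefect_neg hp1 hξ1 hξ0 hneg
    rw [approxRoot] at this
    linarith
  · filter_upwards [eventually_one_lt_and_logDefect_approxRoot_add_pos hδ, eventually_ge_atTop 2]
      with p ⟨hx, hpos⟩ hp
    obtain ⟨hp1, hξ1, hξ0⟩ := hroot p hp
    have := root_lt_of_logDefect_pos hp1 hξ1 hξ0 hx hpos
    rw [approxRoot] at this
    linarith
end
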